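/- arXiv:math/0408377 — 12 statements merged into one kernel-verified Lean document; each statement's English description precedes it below -/
import Mathlib

section
/- Let $L$ be a field, let $j,k$ be positive integers, and let $\lambda, x, y \in L$ with $\lambda \neq 0$. Assume $1 - x\lambda^j \neq 0$, $1 - y\lambda^{-k} \neq 0$, and $1 - xy\lambda^{j-k} \neq 0$ (where $\lambda^{j-k}$ is an integer power of the nonzero element $\lambda$). Then $$\frac{1}{(1-x\lambda^j)(1-y\lambda^{-k})} = \frac{1}{1-xy\lambda^{j-k}}\left(\frac{1}{1-x\lambda^j} + \frac{1}{1-y\lambda^{-k}} - 1\right).$$ -/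
/-- **Elliott Reduction Identity.** For a field `L`, positive integers `j, k`, and
elements `lam, x, y : L` with `lam ≠ 0` such that the three denominators do not vanish,
`1/((1 - x·lam^j)(1 - y·lam^(-k))) = 1/(1 - x·y·lam^(j-k)) ·
  (1/(1 - x·lam^j) + 1/(1 - y·lam^(-k)) - 1)`. -/
theorem elliott_reduction_identity {L : Type*} [Field L] (j k : ℕ) (hj : 0 < j) (hk : 0 < k)
    (lam x y : L) (hlam : lam ≠ 0)
    (h1 : 1 - x * lam ^ (j : ℤ) ≠ 0)
    (h2 : 1 - y * lam ^ (-(k : ℤ)) ≠ 0)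
    (h3 : 1 - x * y * lam ^ ((j : ℤ) - (k : ℤ)) ≠ 0) :
    1 / ((1 - x * lam ^ (j : ℤ)) * (1 - y * lam ^ (-(k : ℤ)))) =
      1 / (1 - x * y * lam ^ ((j : ℤ) - (k : ℤ))) *
        (1 / (1 - x * lam ^ (j : ℤ)) + 1 / (1 - y * lam ^ (-(k : ℤ))) - 1) := by
  have key : lam ^ ((j : ℤ) - (k : ℤ)) = lam ^ (j : ℤ) * lam ^ (-(k : ℤ)) := by
    rw [← zpow_add₀ hlam]; ring_nf
  rw [key] at h3 ⊢
  revert h1 h2 h3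
  generalize lam ^ (j : ℤ) = a
  generalize lam ^ (-(k : ℤ)) = b
  intro h1 h2 h3
  field_simp
  have h3' : 1 - y * b * x * a ≠ 0 := by convert h3 using 2; ring
  linear_combination -mul_inv_cancel₀ h3'
end

section
/- Let $K$ be a field, let $j,k$ be positive integers, and let $a, b \in K$ with $a^k \neq b^j$. Then the polynomials $X^j - a$ and $X^k - b$ are coprime in $K[X]$ (i.e., they generate the unit ideal / IsCoprime holds). -/
open Polynomial

/-- If `a^k ≠ b^j` in a field `K`, then `X^j - C a` and `X^k - C b` are coprime in `K[X]`. -/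
theorem coprime_X_pow_sub_C_of_pow_ne {K : Type*} [Field K] (j k : ℕ) (hj : 0 < j) (hk : 0 < k)
    (a b : K) (hab : a ^ k ≠ b ^ j) :
    IsCoprime (X ^ j - C a : K[X]) (X ^ k - C b) := by
  apply (Polynomial.isCoprime_iff_aeval_ne_zero_of_isAlgClosed (k := K) (AlgebraicClosure K) _ _).mpr
  intro x
  by_contra h
  push_neg at h
  obtain ⟨h1, h2⟩ := h
  simp only [map_sub, map_pow, aeval_X, aeval_C, sub_eq_zero] at h1 h2
  apply hab
  have : (algebraMap K (AlgebraicClosure K)) (a ^ k) = (algebraMap K (AlgebraicClosure K)) (b ^ j) := by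
    rw [map_pow, map_pow, ← h1, ← h2, ← pow_mul, ← pow_mul, mul_comm]
  exact (algebraMap K (AlgebraicClosure K)).injective this
end

section
/- Let $K$ be a field (a commutative ring suffices), let $j$ be a positive integer, let $a \in K$, and let $p \in K[X]$. Then the remainder of $p$ upon division by the monic polynomial $X^j - C a$ equals the polynomial obtained by replacing each monomial $X^d$ of $p$ by $a^{\lfloor d/j \rfloor} X^{(d \bmod j)}$; that is, $$p \bmod (X^j - C a) = \sum_{d \in \mathrm{supp}(p)} C\big(p_d \cdot a^{\lfloor d/j \rfloor}\big)\, X^{(d \bmod j)},$$ where $p_d$ is the coefficient of $X^d$ in $p$, and $\lfloor d/j\rfloor$, $d \bmod j$ are natural-number quotient and remainder. -/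
open Polynomial Finset

/-- The remainder of `p` upon division by the monic polynomial `X^j - C a` (for `j > 0`) is
obtained by replacing each monomial `X^d` of `p` by `a^⌊d/j⌋ · X^(d mod j)`. -/
theorem modByMonic_X_pow_sub_C {K : Type*} [CommRing K] (j : ℕ) (hj : 0 < j) (a : K)
    (p : K[X]) :
    p %ₘ (X ^ j - C a) = ∑ d ∈ p.support, C (p.coeff d * a ^ (d / j)) * X ^ (d % j) := by
  nontriviality K
  set q : K[X] := X ^ j - C a with hq
  have hmonic : q.Monic := monic_X_pow_sub_C a hj.ne'
  set r : K[X] := ∑ d ∈ p.support, C (p.coeff d * a ^ (d / j)) * X ^ (d % j) with hr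
  have hdeg : r.degree < q.degree := by
    rw [hq, degree_X_pow_sub_C hj]
    refine lt_of_le_of_lt (degree_sum_le _ _) ?_
    rw [Finset.sup_lt_iff (by exact_mod_cast WithBot.bot_lt_coe j)]
    intro d _
    refine lt_of_le_of_lt (degree_C_mul_X_pow_le _ _) ?_
    exact_mod_cast Nat.mod_lt d hj
  have hdvd : q ∣ p - r := by
    have hsub : p - r = ∑ d ∈ p.support,
        (C (p.coeff d) * X ^ d - C (p.coeff d * a ^ (d / j)) * X ^ (d % j)) := by
      rw [Finset.sum_sub_distrib, ← as_sum_support_C_mul_X_pow, hr]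
    rw [hsub]
    refine Finset.dvd_sum fun d _ => ?_
    have hX : (X : K[X]) ^ d = (X ^ j) ^ (d / j) * X ^ (d % j) := by
      rw [← pow_mul, ← pow_add, Nat.div_add_mod]
    have heq : C (p.coeff d) * X ^ d - C (p.coeff d * a ^ (d / j)) * X ^ (d % j) =
        C (p.coeff d) * (((X ^ j) ^ (d / j) - (C a) ^ (d / j)) * X ^ (d % j)) := by
      rw [hX, map_mul, map_pow]; ring
    rw [heq]
    exact ((sub_dvd_pow_sub_pow _ _ _).mul_right _).mul_left _
  have := (modByMonic_eq_zero_iff_dvd hmonic).2 hdvd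
  calc p %ₘ q = ((p - r) + r) %ₘ q := by ring_nf
    _ = (p - r) %ₘ q + r %ₘ q := add_modByMonic _ _
    _ = r := by rw [this, (modByMonic_eq_self_iff hmonic).2 hdeg, zero_add]
end

section
/- Let $K$ be a field, let $j,k$ be positive integers, and let $a,b \in K$ with $a^k \neq b^j$. Let $g = \gcd(j,k)$, $j' = j/g$, $k' = k/g$. Then $a^{k'} \neq b^{j'}$, and there exists a polynomial $q \in K[X]$ with $\deg q < k$ such that in $K(X)$ $$\frac{1}{(X^j - a)(X^k - b)} = \frac{1}{a^{k'} - b^{j'}}\cdot \frac{\big(\sum_{i=0}^{j'-1} X^{ik}\, C(b^{j'-1-i})\big) \bmod (X^j - a)}{X^j - a} \; + \; \frac{q}{X^k - b}.$$ In other words, the partial fraction component of $1/((X^j-a)(X^k-b))$ with respect to $X^j - a$ is $\mathrm{Frac}\big(\mathcal{F}(X^j-a, X^k-b)/(X^j-a)\big)$, where $\mathcal{F}(X^j-a,X^k-b) = \big(\sum_{i=0}^{j'-1} X^{ik} b^{j'-1-i}\big)/(a^{k'}-b^{j'})$. -/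
open Polynomial Finset

/-- With `g = gcd(j,k)`, `j' = j/g`, `k' = k/g`, and `a^k ≠ b^j`, one has `a^{k'} ≠ b^{j'}`
and the partial fraction component of `1/((X^j-a)(X^k-b))` with respect to `X^j - a` is
`Frac(F(X^j-a, X^k-b)/(X^j-a))` where
`F(X^j-a, X^k-b) = (∑_{i<j'} X^{ik} b^{j'-1-i})/(a^{k'} - b^{j'})`. -/
theorem elliott_partial_fraction_gcd {K : Type*} [Field K] (j k : ℕ) (hj : 0 < j) (hk : 0 < k)
    (a b : K) (hab : a ^ k ≠ b ^ j) :
    a ^ (k / Nat.gcd j k) ≠ b ^ (j / Nat.gcd j k) ∧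
      ∃ q : K[X], q.degree < (k : ℕ) ∧
        (1 : RatFunc K) /
            (algebraMap K[X] (RatFunc K) (X ^ j - C a) *
              algebraMap K[X] (RatFunc K) (X ^ k - C b)) =
          (algebraMap K[X] (RatFunc K)
              (C (a ^ (k / Nat.gcd j k) - b ^ (j / Nat.gcd j k))))⁻¹ *
            (algebraMap K[X] (RatFunc K)
                ((∑ i ∈ range (j / Nat.gcd j k),
                    X ^ (i * k) * C (b ^ (j / Nat.gcd j k - 1 - i))) %ₘ (X ^ j - C a)) /
              algebraMap K[X] (RatFunc K) (X ^ j - C a)) +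
          algebraMap K[X] (RatFunc K) q / algebraMap K[X] (RatFunc K) (X ^ k - C b) := by
  set g := Nat.gcd j k with hg
  set j' := j / g with hj'def
  set k' := k / g with hk'def
  have hjg : j' * g = j := Nat.div_mul_cancel (Nat.gcd_dvd_left j k)
  have hkg : k' * g = k := Nat.div_mul_cancel (Nat.gcd_dvd_right j k)
  have hd : a ^ k' ≠ b ^ j' := by
    intro h
    exact hab (by rw [← hkg, ← hjg, pow_mul, pow_mul, h])
  refine ⟨hd, ?_⟩
  set d := a ^ k' - b ^ j' with hdd
  have hd0 : d ≠ 0 := sub_ne_zero.mpr hd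
  set P : K[X] := X ^ j - C a with hP
  set Q : K[X] := X ^ k - C b with hQ
  have hPm : P.Monic := monic_X_pow_sub_C a hj.ne'
  have hQm : Q.Monic := monic_X_pow_sub_C b hk.ne'
  have hPdeg : P.degree = (j : ℕ) := degree_X_pow_sub_C hj a
  have hQdeg : Q.degree = (k : ℕ) := degree_X_pow_sub_C hk b
  set F : K[X] := ∑ i ∈ range j', X ^ (i * k) * C (b ^ (j' - 1 - i)) with hF
  have hjk : j' * k = j * k' := by
    rw [← hkg, ← mul_assoc, mul_comm j' k', mul_assoc, hjg, mul_comm]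
  have hgeom : F * Q = X ^ (j' * k) - C (b ^ j') := by
    have h := geom_sum₂_mul (X ^ k : K[X]) (C b) j'
    simp only [← pow_mul, ← C_pow, mul_comm k] at h
    exact h
  set s : K[X] := F %ₘ P with hs
  have hsdeg : s.degree < (j : ℕ) := hPdeg ▸ degree_modByMonic_lt F hPm
  have hdvd1 : P ∣ F * Q - C d := by
    have h1 : F * Q - C d = (X ^ j) ^ k' - (C a) ^ k' := by
      rw [hgeom, hjk, pow_mul, hdd, C_sub, C_pow, C_pow]
      ring
    rw [h1]
    exact sub_dvd_pow_sub_pow _ _ _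
  have hdvd2 : P ∣ F - s := by
    rw [hs, modByMonic_eq_sub_mul_div F P]
    exact ⟨F /ₘ P, by ring⟩
  have hdvd3 : P ∣ C d - s * Q := by
    have : C d - s * Q = (F - s) * Q - (F * Q - C d) := by ring
    rw [this]
    exact dvd_sub (hdvd2.mul_right Q) hdvd1
  obtain ⟨t, ht⟩ := hdvd3
  -- degree of t
  have htdeg : t.degree < (k : ℕ) := by
    rcases eq_or_ne t 0 with rfl | ht0
    · rw [degree_zero]
      exact WithBot.bot_lt_coe k
    have h1 : (C d - s * Q).degree < (j : ℕ) + (k : ℕ) := by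
      refine lt_of_le_of_lt (degree_sub_le _ _) (max_lt ?_ ?_)
      · refine lt_of_le_of_lt (degree_C_le) ?_
        rw [← Nat.cast_add]
        exact_mod_cast Nat.add_pos_left hj k
      · rw [degree_mul, hQdeg]
        exact WithBot.add_lt_add_right (WithBot.coe_ne_bot) hsdeg
    rw [ht, degree_mul, hPdeg] at h1
    exact (WithBot.add_lt_add_iff_left (WithBot.coe_ne_bot)).mp h1
  have hqdeg : (C d⁻¹ * t).degree < (k : ℕ) := by
    refine lt_of_le_of_lt ?_ htdeg
    rw [← smul_eq_C_mul]
    exact degree_smul_le _ _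
  refine ⟨C d⁻¹ * t, hqdeg, ?_⟩
  -- polynomial identity
  have hpoly : C d⁻¹ * s * Q + (C d⁻¹ * t) * P = 1 := by
    have : s * Q + P * t = C d := by linear_combination -ht
    calc C d⁻¹ * s * Q + (C d⁻¹ * t) * P = C d⁻¹ * (s * Q + P * t) := by ring
      _ = C d⁻¹ * C d := by rw [this]
      _ = 1 := by rw [← C_mul, inv_mul_cancel₀ hd0, C_1]
  set A := algebraMap K[X] (RatFunc K) with hA
  have hAP : A P ≠ 0 := by
    simpa [hA] using (RatFunc.algebraMap_ne_zero hPm.ne_zero)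
  have hAQ : A Q ≠ 0 := by
    simpa [hA] using (RatFunc.algebraMap_ne_zero hQm.ne_zero)
  have hinv : (A (C d))⁻¹ = A (C d⁻¹) := by
    symm
    apply eq_inv_of_mul_eq_one_left
    rw [← map_mul, ← C_mul, inv_mul_cancel₀ hd0, C_1, map_one]
  rw [hinv]
  rw [← mul_div_assoc]
  rw [← map_mul A (C d⁻¹) s]
  rw [div_add_div _ _ hAP hAQ]
  rw [← map_mul A (C d⁻¹ * s) Q]
  rw [← map_mul A P (C d⁻¹ * t)]
  rw [← map_add]
  rw [show C d⁻¹ * s * Q + P * (C d⁻¹ * t) = 1 by linear_combination hpoly, map_one]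
end

section
/- Let $K$ be a field, let $j_1, \dots, j_n$ be positive integers and $z_1, \dots, z_n \in K$ be such that for all $s \neq i$, setting $g = \gcd(j_s, j_i)$, one has $z_s^{j_i/g} \neq z_i^{j_s/g}$ (so the polynomials $X^{j_i} - z_i$ are pairwise coprime). Let $P \in K[X]$ and let $$F = \frac{P}{\prod_{i=1}^n (X^{j_i} - z_i)} = f + \sum_{i=1}^n \frac{p_i}{X^{j_i} - z_i}$$ be the unique decomposition in $K(X)$ with $f, p_i \in K[X]$ and $\deg p_i < j_i$. Then for each $s$, $$p_s = \Big( P \cdot \prod_{i \neq s} \frac{\sum_{t=0}^{j_s'-1} X^{t j_i}\, z_i^{\,j_s' - 1 - t}}{z_s^{\,j_i'} - z_i^{\,j_s'}} \Big) \bmod (X^{j_s} - z_s),$$ where for each $i$, $g = \gcd(j_s, j_i)$, $j_s' = j_s/g$, $j_i' = j_i/g$, and $\bmod$ denotes the remainder upon division by the monic polynomial $X^{j_s} - z_s$. -/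
open Polynomial Finset

private lemma dvd_prod_sub_one {R : Type*} [CommRing R] {d : R} {ι : Type*}
    (t : Finset ι) (a : ι → R) (h : ∀ i ∈ t, d ∣ a i - 1) :
    d ∣ (∏ i ∈ t, a i) - 1 := by
  classical
  induction t using Finset.cons_induction with
  | empty => simp
  | cons i t hi ih =>
    rw [Finset.prod_cons]
    have h1 : d ∣ a i - 1 := h i (Finset.mem_cons_self i t)
    have h2 : d ∣ (∏ k ∈ t, a k) - 1 := ih fun k hk => h k (Finset.mem_cons_of_mem hk)
    have : a i * ∏ k ∈ t, a k - 1 = a i * ((∏ k ∈ t, a k) - 1) + (a i - 1) := by ring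
    rw [this]
    exact dvd_add (Dvd.dvd.mul_left h2 _) h1

private lemma inv_mod_aux {K : Type*} [Field K] (a b : ℕ) (ha : 0 < a)
    (zs zi : K) (hne : zs ^ (b / Nat.gcd a b) ≠ zi ^ (a / Nat.gcd a b)) :
    (X ^ a - C zs : K[X]) ∣
      (X ^ b - C zi) *
        (C ((zs ^ (b / Nat.gcd a b) - zi ^ (a / Nat.gcd a b))⁻¹) *
          ∑ t ∈ Finset.range (a / Nat.gcd a b),
            X ^ (t * b) * C (zi ^ (a / Nat.gcd a b - 1 - t))) - 1 := by
  obtain ⟨a', ha'⟩ := Nat.gcd_dvd_left a b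
  obtain ⟨b', hb'⟩ := Nat.gcd_dvd_right a b
  have hgpos : 0 < Nat.gcd a b := Nat.gcd_pos_of_pos_left _ ha
  have e1 : a / Nat.gcd a b = a' := by
    calc a / Nat.gcd a b = Nat.gcd a b * a' / Nat.gcd a b := by rw [← ha']
    _ = a' := Nat.mul_div_cancel_left _ hgpos
  have e2 : b / Nat.gcd a b = b' := by
    calc b / Nat.gcd a b = Nat.gcd a b * b' / Nat.gcd a b := by rw [← hb']
    _ = b' := Nat.mul_div_cancel_left _ hgpos
  rw [e1, e2] at hne ⊢
  have hc : zs ^ b' - zi ^ a' ≠ 0 := sub_ne_zero.2 hne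
  have hmul : b * a' = a * b' := by
    calc b * a' = Nat.gcd a b * b' * a' := by rw [← hb']
    _ = Nat.gcd a b * a' * b' := by ring
    _ = a * b' := by rw [← ha']
  have hgeom : (∑ t ∈ Finset.range a', X ^ (t * b) * C (zi ^ (a' - 1 - t))) *
      ((X : K[X]) ^ b - C zi) = (X ^ a) ^ b' - C zi ^ a' := by
    have e : ∀ t, (X : K[X]) ^ (t * b) = (X ^ b) ^ t := fun t => by
      rw [← pow_mul, Nat.mul_comm]
    simp_rw [e, C_pow]
    rw [geom_sum₂_mul, ← pow_mul, ← pow_mul, hmul]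
  have hone : C ((zs ^ b' - zi ^ a')⁻¹) * C (zs ^ b' - zi ^ a') = (1 : K[X]) := by
    rw [← C_mul, inv_mul_cancel₀ hc, C_1]
  have key : (X ^ b - C zi) *
        (C ((zs ^ b' - zi ^ a')⁻¹) *
          ∑ t ∈ Finset.range a', X ^ (t * b) * C (zi ^ (a' - 1 - t))) - 1
      = C ((zs ^ b' - zi ^ a')⁻¹) * ((X ^ a) ^ b' - C zs ^ b') := by
    rw [← hone, mul_left_comm, mul_comm (X ^ b - C zi), hgeom, map_sub, C_pow, C_pow]
    ring
  rw [key]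
  exact Dvd.dvd.mul_left (sub_dvd_pow_sub_pow _ _ b') _

/-- **Partial fraction numerators of an Elliott-rational function.** Let `j i > 0`,
`z i ∈ K` with `z s ^ (j i / g) ≠ z i ^ (j s / g)` (`g = gcd (j s) (j i)`) for `s ≠ i`,
so the `X^(j i) - z i` are pairwise coprime. If
`P / ∏ (X^(j i) - z i) = f + ∑ p i / (X^(j i) - z i)` with `deg (p i) < j i`,
then each `p s` equals the remainder of
`P · ∏_{i ≠ s} (∑_{t < j s / g} X^(t·j i) z i^(j s / g - 1 - t)) / (z s^(j i / g) - z i^(j s / g))`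
upon division by `X^(j s) - z s`. -/
theorem elliott_partial_fraction_numerators {K : Type*} [Field K] (n : ℕ)
    (j : Fin n → ℕ) (z : Fin n → K) (hj : ∀ i, 0 < j i)
    (hz : ∀ s i, s ≠ i →
      z s ^ (j i / Nat.gcd (j s) (j i)) ≠ z i ^ (j s / Nat.gcd (j s) (j i)))
    (P : K[X]) (f : K[X]) (p : Fin n → K[X])
    (hdeg : ∀ i, (p i).degree < (j i : ℕ))
    (heq : algebraMap K[X] (RatFunc K) P /
        (∏ i, algebraMap K[X] (RatFunc K) (X ^ (j i) - C (z i))) =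
      algebraMap K[X] (RatFunc K) f +
        ∑ i, algebraMap K[X] (RatFunc K) (p i) /
          algebraMap K[X] (RatFunc K) (X ^ (j i) - C (z i))) :
    ∀ s, p s =
      (P * ∏ i ∈ univ.erase s,
          C ((z s ^ (j i / Nat.gcd (j s) (j i)) - z i ^ (j s / Nat.gcd (j s) (j i)))⁻¹) *
            ∑ t ∈ range (j s / Nat.gcd (j s) (j i)),
              X ^ (t * j i) * C (z i ^ (j s / Nat.gcd (j s) (j i) - 1 - t))) %ₘ
        (X ^ (j s) - C (z s)) := by
  classical
  intro s
  set A := algebraMap K[X] (RatFunc K) with hA'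
  have hA : Function.Injective A := IsFractionRing.injective _ _
  set D : Fin n → K[X] := fun i => X ^ (j i) - C (z i) with hD
  have hDi : ∀ k, (X ^ (j k) - C (z k) : K[X]) = D k := fun k => rfl
  simp only [hDi] at heq
  have hDmonic : ∀ i, (D i).Monic := fun i => monic_X_pow_sub_C _ (hj i).ne'
  have hDne : ∀ i, D i ≠ 0 := fun i => (hDmonic i).ne_zero
  have hADne : ∀ i, A (D i) ≠ 0 := fun i => by
    simpa using (map_ne_zero_iff A hA).2 (hDne i)
  have hPi : (∏ i, A (D i)) ≠ 0 := prod_ne_zero_iff.2 fun i _ => hADne i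
  rw [div_eq_iff hPi] at heq
  -- Step 1: polynomial identity
  have key : P = f * ∏ i, D i + ∑ i, p i * ∏ k ∈ univ.erase i, D k := by
    apply hA
    rw [heq, map_add, map_mul, map_prod, map_sum, add_mul, Finset.sum_mul]
    congr 1
    refine Finset.sum_congr rfl fun i _ => ?_
    rw [map_mul, map_prod, ← Finset.mul_prod_erase _ (fun k => A (D k)) (mem_univ i),
      mul_comm (A (D i)) (∏ k ∈ univ.erase i, A (D k)), ← mul_assoc,
      mul_comm (A (p i) / A (D i)) (∏ k ∈ univ.erase i, A (D k)), mul_assoc,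
      div_mul_cancel₀ _ (hADne i), mul_comm]
  -- Step 2: P ≡ p s * ∏_{i ≠ s} D i  mod D s
  have hmod1 : D s ∣ P - p s * ∏ i ∈ univ.erase s, D i := by
    rw [key, ← Finset.add_sum_erase _ _ (mem_univ s), add_comm (p s * _),
      ← add_assoc, add_sub_cancel_right]
    refine dvd_add (Dvd.dvd.mul_left (dvd_prod_of_mem D (mem_univ s)) f) ?_
    refine Finset.dvd_sum fun i hi => ?_
    have hsi : s ∈ univ.erase i :=
      Finset.mem_erase.2 ⟨(Finset.mem_erase.1 hi).1.symm, mem_univ s⟩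
    exact Dvd.dvd.mul_left (dvd_prod_of_mem D hsi) _
  -- Step 3: the inverses mod D s
  have hinv : ∀ i ∈ univ.erase s, (D s : K[X]) ∣
      D i * (C ((z s ^ (j i / Nat.gcd (j s) (j i)) - z i ^ (j s / Nat.gcd (j s) (j i)))⁻¹) *
        ∑ t ∈ range (j s / Nat.gcd (j s) (j i)),
          X ^ (t * j i) * C (z i ^ (j s / Nat.gcd (j s) (j i) - 1 - t))) - 1 := by
    intro i hi
    have hsi : s ≠ i := fun h => (Finset.mem_erase.1 hi).1 h.symm
    exact inv_mod_aux (j s) (j i) (hj s) (z s) (z i) (hz s i hsi)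
  set Q : Fin n → K[X] := fun i =>
    C ((z s ^ (j i / Nat.gcd (j s) (j i)) - z i ^ (j s / Nat.gcd (j s) (j i)))⁻¹) *
      ∑ t ∈ range (j s / Nat.gcd (j s) (j i)),
        X ^ (t * j i) * C (z i ^ (j s / Nat.gcd (j s) (j i) - 1 - t)) with hQ
  -- Step 4: combine
  have hmain : D s ∣ P * (∏ i ∈ univ.erase s, Q i) - p s := by
    have h1 : D s ∣ (∏ i ∈ univ.erase s, (D i * Q i)) - 1 :=
      dvd_prod_sub_one _ _ hinv
    have h2 : P * (∏ i ∈ univ.erase s, Q i) - p s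
        = (P - p s * ∏ i ∈ univ.erase s, D i) * (∏ i ∈ univ.erase s, Q i)
          + p s * ((∏ i ∈ univ.erase s, (D i * Q i)) - 1) := by
      rw [show (∏ i ∈ univ.erase s, (D i * Q i))
          = (∏ i ∈ univ.erase s, D i) * ∏ i ∈ univ.erase s, Q i from
        Finset.prod_mul_distrib]
      ring
    rw [h2]
    exact dvd_add (Dvd.dvd.mul_right hmod1 _) (Dvd.dvd.mul_left h1 _)
  have hself : p s %ₘ (X ^ (j s) - C (z s)) = p s := by
    rw [modByMonic_eq_self_iff (hDmonic s), degree_X_pow_sub_C (hj s)]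
    exact hdeg s
  have hfin : (P * ∏ i ∈ univ.erase s, Q i) %ₘ (X ^ (j s) - C (z s))
      = p s %ₘ (X ^ (j s) - C (z s)) := by
    rw [← sub_eq_zero, ← sub_modByMonic]
    exact (modByMonic_eq_zero_iff_dvd (hDmonic s)).2 hmain
  exact (hself.symm.trans hfin.symm :)
end

section
/- Let $K$ be a field, and let $F \in K(X)$ have a decomposition $$F = f + \sum_{i \in I} \frac{p_i}{X^{j_i} - z_i}$$ where $I$ is a finite index set, $f, p_i \in K[X]$, $j_i \geq 1$, $z_i \in K$, and $\deg p_i < j_i$ for each $i$. Consider the canonical embedding of $K(X)$ into the field of formal Laurent series $K((X))$ (expansion at $X = 0$, in which every nonzero constant $z_i$ dominates $X^{j_i}$). Then for every integer $n \geq 0$, the coefficient of $X^n$ in the Laurent expansion of $F$ equals the coefficient of $X^n$ in the Laurent expansion of $$f + \sum_{i \in I,\ z_i \neq 0} \frac{p_i}{X^{j_i} - z_i}.$$ (That is, $\mathrm{PT}_X F$ is given by dropping exactly the terms with $z_i = 0$.) -/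
open Polynomial Finset Classical

open scoped Classical

theorem aux_zero {K : Type*} [Field K] (p : K[X]) (j : ℕ) (hdeg : p.degree < (j:ℕ)) (n : ℤ) (hn : 0 ≤ n) :
  ((algebraMap K[X] (RatFunc K) p / algebraMap K[X] (RatFunc K) (X^j : K[X]) : RatFunc K) : LaurentSeries K).coeff n = 0 := by
  rw [map_div₀]
  have hp : ((algebraMap K[X] (RatFunc K) p : RatFunc K) : LaurentSeries K) = ((p : PowerSeries K) : LaurentSeries K) := by
    rw [RatFunc.coe_coe]; rfl
  have hX : ((algebraMap K[X] (RatFunc K) (X^j : K[X]) : RatFunc K) : LaurentSeries K) = HahnSeries.single (j : ℤ) (1 : K) := by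
    have : ((algebraMap K[X] (RatFunc K) (X^j : K[X]) : RatFunc K) : LaurentSeries K)
        = (((X^j : K[X]) : PowerSeries K) : LaurentSeries K) := by
      rw [RatFunc.coe_coe]; rfl
    rw [this, Polynomial.coe_pow, Polynomial.coe_X, PowerSeries.coe_pow, PowerSeries.coe_X,
      HahnSeries.single_pow]
    simp
  rw [hp, hX, div_eq_mul_inv, HahnSeries.inv_single (j : ℤ) (1 : K), inv_one,
    show n = (n + j) + (-(j:ℤ)) by ring, HahnSeries.coeff_mul_single_add]
  have h1 : ((p : PowerSeries K) : LaurentSeries K).coeff (n + j) =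
      PowerSeries.coeff (R := K) (n + (j:ℤ)).natAbs (p : PowerSeries K) := by
    rw [PowerSeries.coeff_coe]
    rw [if_neg]
    omega
  rw [h1, Polynomial.coeff_coe, Polynomial.coeff_eq_zero_of_degree_lt, mul_one]
  calc p.degree < (j : ℕ) := hdeg
    _ ≤ ((n + (j:ℤ)).natAbs : WithBot ℕ) := by
        norm_cast; omega

/-- If `F = f + ∑ pᵢ/(X^{jᵢ} - zᵢ)` in `K(X)` with `deg pᵢ < jᵢ`, then for each `n ≥ 0` the
coefficient of `X^n` in the Laurent expansion of `F` at `X = 0` equals that of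
`f + ∑_{zᵢ ≠ 0} pᵢ/(X^{jᵢ} - zᵢ)`: taking the nonnegative part (`PT`) drops exactly
the terms with `zᵢ = 0`. -/
theorem PT_of_partial_fraction {K : Type*} [Field K] {ι : Type*} [Fintype ι]
    (f : K[X]) (p : ι → K[X]) (j : ι → ℕ) (z : ι → K)
    (hj : ∀ i, 1 ≤ j i) (hdeg : ∀ i, (p i).degree < (j i : ℕ))
    (F : RatFunc K)
    (hF : F = algebraMap K[X] (RatFunc K) f +
      ∑ i, algebraMap K[X] (RatFunc K) (p i) /
        algebraMap K[X] (RatFunc K) (X ^ (j i) - C (z i))) :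
    ∀ n : ℤ, 0 ≤ n →
      (F : LaurentSeries K).coeff n =
        ((algebraMap K[X] (RatFunc K) f +
            ∑ i ∈ univ.filter (fun i => z i ≠ 0),
              algebraMap K[X] (RatFunc K) (p i) /
                algebraMap K[X] (RatFunc K) (X ^ (j i) - C (z i)) :
          RatFunc K) : LaurentSeries K).coeff n := by
  intro n hn
  have hsplit : F = (algebraMap K[X] (RatFunc K) f +
      ∑ i ∈ univ.filter (fun i => z i ≠ 0),
        algebraMap K[X] (RatFunc K) (p i) /
          algebraMap K[X] (RatFunc K) (X ^ (j i) - C (z i))) +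
      ∑ i ∈ univ.filter (fun i => ¬ z i ≠ 0),
        algebraMap K[X] (RatFunc K) (p i) /
          algebraMap K[X] (RatFunc K) (X ^ (j i) - C (z i)) := by
    rw [hF, ← Finset.sum_filter_add_sum_filter_not univ (fun i => z i ≠ 0), add_assoc]
  rw [hsplit, map_add, HahnSeries.coeff_add, add_eq_left]
  have hcoe : ((∑ i ∈ univ.filter (fun i => ¬ z i ≠ 0),
      algebraMap K[X] (RatFunc K) (p i) /
        algebraMap K[X] (RatFunc K) (X ^ (j i) - C (z i)) : RatFunc K) : LaurentSeries K)
      = ∑ i ∈ univ.filter (fun i => ¬ z i ≠ 0),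
        ((algebraMap K[X] (RatFunc K) (p i) /
          algebraMap K[X] (RatFunc K) (X ^ (j i) - C (z i)) : RatFunc K) : LaurentSeries K) :=
    map_sum _ _ _
  rw [hcoe, show (∑ i ∈ univ.filter (fun i => ¬ z i ≠ 0),
        ((algebraMap K[X] (RatFunc K) (p i) /
          algebraMap K[X] (RatFunc K) (X ^ (j i) - C (z i)) : RatFunc K) : LaurentSeries K)).coeff n
      = ∑ i ∈ univ.filter (fun i => ¬ z i ≠ 0),
        ((algebraMap K[X] (RatFunc K) (p i) /
          algebraMap K[X] (RatFunc K) (X ^ (j i) - C (z i)) : RatFunc K) : LaurentSeries K).coeff n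
    from map_sum (HahnSeries.coeff.addMonoidHom n) _ _]
  apply Finset.sum_eq_zero
  intro i hi
  simp only [Finset.mem_filter, not_not] at hi
  rw [hi.2, map_zero, sub_zero]
  exact aux_zero (p i) (j i) (hdeg i) n hn
end

section
/- Let $K$ be a field, and let $F \in K(X)$ have a decomposition $$F = f + \sum_{i \in I} \frac{p_i}{X^{j_i} - z_i}$$ where $I$ is a finite index set, $f, p_i \in K[X]$, $j_i \geq 1$, $z_i \in K$, and $\deg p_i < j_i$ for each $i$. Then the coefficient of $X^0$ in the Laurent expansion of $F$ under the canonical embedding $K(X) \to K((X))$ equals $$f(0) \; - \sum_{i \in I,\ z_i \neq 0} \frac{p_i(0)}{z_i}.$$ -/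
open Polynomial Finset

open scoped Classical

lemma CT_term_ne_zero {K : Type*} [Field K] (p : K[X]) (j : ℕ) (z : K) (hj : 1 ≤ j)
    (hz : z ≠ 0) :
    ((algebraMap K[X] (RatFunc K) p /
        algebraMap K[X] (RatFunc K) (X ^ j - C z) : RatFunc K) : LaurentSeries K).coeff 0 =
      -(p.eval 0 / z) := by
  have hj0 : j ≠ 0 := Nat.one_le_iff_ne_zero.mp hj
  have hd : PowerSeries.constantCoeff ((X ^ j - C z : K[X]) : PowerSeries K) = -z := by
    simp [Polynomial.coeff_coe, Polynomial.coeff_X_pow, hj0]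
  have hd' : PowerSeries.constantCoeff ((X ^ j - C z : K[X]) : PowerSeries K) ≠ 0 := by
    rw [hd]; simpa using hz
  have hunit : ((X ^ j - C z : K[X]) : PowerSeries K) *
      ((X ^ j - C z : K[X]) : PowerSeries K)⁻¹ = 1 :=
    PowerSeries.mul_inv_cancel _ hd'
  have hinv : (((X ^ j - C z : K[X]) : RatFunc K) : LaurentSeries K)⁻¹ =
      ((((X ^ j - C z : K[X]) : PowerSeries K)⁻¹ : PowerSeries K) : LaurentSeries K) := by
    rw [← RatFunc.coe_coe]
    refine inv_eq_of_mul_eq_one_right ?_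
    rw [← PowerSeries.coe_mul, hunit, PowerSeries.coe_one]
  have key : ((algebraMap K[X] (RatFunc K) p /
        algebraMap K[X] (RatFunc K) (X ^ j - C z) : RatFunc K) : LaurentSeries K) =
      (((p : PowerSeries K) * (((X ^ j - C z : K[X]) : PowerSeries K))⁻¹ : PowerSeries K) :
        LaurentSeries K) := by
    rw [map_div₀, div_eq_mul_inv, ← RatFunc.coePolynomial, ← RatFunc.coePolynomial,
      hinv, ← RatFunc.coe_coe, ← PowerSeries.coe_mul]
  rw [key]
  have : ((((p : PowerSeries K) * (((X ^ j - C z : K[X]) : PowerSeries K))⁻¹ : PowerSeries K) :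
      LaurentSeries K)).coeff (0 : ℤ) = PowerSeries.coeff 0
        ((p : PowerSeries K) * (((X ^ j - C z : K[X]) : PowerSeries K))⁻¹) := by
    exact_mod_cast LaurentSeries.coeff_coe_powerSeries _ 0
  rw [this]
  simp only [PowerSeries.coeff_zero_eq_constantCoeff, map_mul, PowerSeries.constantCoeff_inv, hd]
  rw [Polynomial.constantCoeff_coe]
  field_simp
  rw [Polynomial.coeff_zero_eq_eval_zero]

lemma CT_term_zero {K : Type*} [Field K] (p : K[X]) (j : ℕ) (hdeg : p.degree < (j : ℕ)) :
    ((algebraMap K[X] (RatFunc K) p /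
        algebraMap K[X] (RatFunc K) (X ^ j : K[X]) : RatFunc K) : LaurentSeries K).coeff 0
      = 0 := by
  have hX : ((X ^ j : K[X]) : RatFunc K) =
      ((PowerSeries.X ^ j : PowerSeries K) : LaurentSeries K) := by
    rw [← RatFunc.coe_coe]; push_cast; rfl
  have hXs : ((PowerSeries.X ^ j : PowerSeries K) : LaurentSeries K) =
      HahnSeries.single (j : ℤ) 1 := HahnSeries.ofPowerSeries_X_pow j
  have hinv : (((X ^ j : K[X]) : RatFunc K) : LaurentSeries K)⁻¹ =
      HahnSeries.single (-(j : ℤ)) 1 := by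
    rw [hX, hXs]
    refine inv_eq_of_mul_eq_one_right ?_
    rw [HahnSeries.single_mul_single, add_neg_cancel, one_mul]
    rfl
  rw [map_div₀, div_eq_mul_inv, ← RatFunc.coePolynomial, ← RatFunc.coePolynomial, hinv,
    ← RatFunc.coe_coe]
  have := HahnSeries.coeff_mul_single_add (r := (1:K))
    (x := ((p : PowerSeries K) : LaurentSeries K)) (a := (j : ℤ)) (b := (-(j:ℤ)))
  rw [add_neg_cancel] at this
  rw [this, mul_one]
  have h2 : (((p : PowerSeries K) : LaurentSeries K)).coeff ((j : ℕ) : ℤ) =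
      PowerSeries.coeff j (p : PowerSeries K) := LaurentSeries.coeff_coe_powerSeries _ j
  rw [h2, Polynomial.coeff_coe]
  exact Polynomial.coeff_eq_zero_of_degree_lt hdeg

/-- If `F = f + ∑ pᵢ/(X^{jᵢ} - zᵢ)` in `K(X)` with `deg pᵢ < jᵢ`, then the constant term
(the coefficient of `X^0`) of the Laurent expansion of `F` at `X = 0` equals
`f(0) - ∑_{zᵢ ≠ 0} pᵢ(0)/zᵢ`. -/
theorem CT_of_partial_fraction {K : Type*} [Field K] {ι : Type*} [Fintype ι]
    (f : K[X]) (p : ι → K[X]) (j : ι → ℕ) (z : ι → K)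
    (hj : ∀ i, 1 ≤ j i) (hdeg : ∀ i, (p i).degree < (j i : ℕ))
    (F : RatFunc K)
    (hF : F = algebraMap K[X] (RatFunc K) f +
      ∑ i, algebraMap K[X] (RatFunc K) (p i) /
        algebraMap K[X] (RatFunc K) (X ^ (j i) - C (z i))) :
    (F : LaurentSeries K).coeff 0 =
      f.eval 0 - ∑ i ∈ univ.filter (fun i => z i ≠ 0), (p i).eval 0 / z i := by
  subst hF
  rw [map_add, HahnSeries.coeff_add]
  have hsum : ((∑ i, algebraMap K[X] (RatFunc K) (p i) /
        algebraMap K[X] (RatFunc K) (X ^ (j i) - C (z i)) : RatFunc K) :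
      LaurentSeries K).coeff 0 =
      ∑ i, ((algebraMap K[X] (RatFunc K) (p i) /
        algebraMap K[X] (RatFunc K) (X ^ (j i) - C (z i)) : RatFunc K) :
          LaurentSeries K).coeff 0 := by
    rw [map_sum]
    exact map_sum (HahnSeries.coeff.addMonoidHom (0 : ℤ)) _ _
  have hf : ((algebraMap K[X] (RatFunc K) f : RatFunc K) : LaurentSeries K).coeff 0 =
      f.eval 0 := by
    rw [← RatFunc.coePolynomial, ← RatFunc.coe_coe]
    have := LaurentSeries.coeff_coe_powerSeries (f : PowerSeries K) 0
    rw [show ((0 : ℕ) : ℤ) = (0 : ℤ) by rfl] at this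
    rw [this, Polynomial.coeff_coe, Polynomial.coeff_zero_eq_eval_zero]
  rw [hsum, hf]
  have hterm : ∀ i, ((algebraMap K[X] (RatFunc K) (p i) /
        algebraMap K[X] (RatFunc K) (X ^ (j i) - C (z i)) : RatFunc K) :
          LaurentSeries K).coeff 0 =
      if z i ≠ 0 then -((p i).eval 0 / z i) else 0 := by
    intro i
    by_cases hz : z i = 0
    · rw [if_neg (by simpa using hz)]
      have : (X ^ (j i) - C (z i) : K[X]) = X ^ (j i) := by rw [hz, map_zero, sub_zero]
      rw [this]
      exact CT_term_zero (p i) (j i) (hdeg i)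
    · rw [if_pos hz]
      exact CT_term_ne_zero (p i) (j i) (z i) (hj i) hz
  rw [Finset.sum_congr rfl (fun i _ => hterm i)]
  rw [Finset.sum_ite, Finset.sum_const_zero, add_zero, Finset.sum_neg_distrib]
  ring
end

section
/- Let $F$ be a field, $n$ a natural number, and let $K$ be the fraction field of the multivariate polynomial ring $F[x_1,\dots,x_n]$. For $t = 1,2,3$ let $j_t$ be a positive integer and let $z_t \in K$ be a Laurent monomial, i.e., $z_t = \prod_{s=1}^n x_s^{v_{t,s}}$ for some integer exponent vector $v_t \in \mathbb{Z}^n$ (integer powers taken in $K$). If $X^{j_1} - z_1$ is not coprime to $X^{j_2} - z_2$ in $K[X]$, and $X^{j_1} - z_1$ is not coprime to $X^{j_3} - z_3$ in $K[X]$, then $X^{j_2} - z_2$ and $X^{j_3} - z_3$ are not coprime in $K[X]$. -/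
open Polynomial

section Aux

/-- zpow-nat-pow rule in a field for nonzero base. -/
lemma aux_zpow_pow {K : Type*} [Field K] {x : K} (hx : x ≠ 0) (m : ℤ) (k : ℕ) :
    (x ^ m) ^ k = x ^ (m * k) := by
  induction k with
  | zero => simp
  | succ k ih =>
      rw [pow_succ, ih, ← zpow_add₀ hx]
      congr 1; push_cast; ring

/-- Products of powers of variables in `MvPolynomial` determine exponents. -/
lemma aux_mv_pow_inj {F : Type*} [Field F] {n : ℕ} (a b : Fin n → ℕ)
    (h : (∏ s, (MvPolynomial.X s : MvPolynomial (Fin n) F) ^ a s)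
       = ∏ s, (MvPolynomial.X s : MvPolynomial (Fin n) F) ^ b s) : a = b := by
  have key : ∀ c : Fin n → ℕ,
      (∏ s, (MvPolynomial.X s : MvPolynomial (Fin n) F) ^ c s)
        = MvPolynomial.monomial (Finsupp.equivFunOnFinite.symm c) (1 : F) := by
    intro c
    rw [← MvPolynomial.prod_X_pow_eq_monomial]
    refine (Finset.prod_subset (Finset.subset_univ _) ?_).symm
    intro x _ hx
    have h0 : c x = 0 := Finsupp.notMem_support_iff.mp hx
    rw [h0, pow_zero]
  rw [key, key] at h
  have := MvPolynomial.monomial_left_injective (one_ne_zero (α := F)) h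
  have := Finsupp.equivFunOnFinite.symm.injective this
  exact this

/-- Laurent monomials in the fraction field determine their exponents. -/
lemma aux_zpow_monomial_inj {F : Type*} [Field F] {n : ℕ} (v w : Fin n → ℤ)
    (h : (∏ s, (algebraMap (MvPolynomial (Fin n) F)
        (FractionRing (MvPolynomial (Fin n) F)) (MvPolynomial.X s)) ^ (v s))
      = ∏ s, (algebraMap (MvPolynomial (Fin n) F)
        (FractionRing (MvPolynomial (Fin n) F)) (MvPolynomial.X s)) ^ (w s)) : v = w := by
  set φ := algebraMap (MvPolynomial (Fin n) F) (FractionRing (MvPolynomial (Fin n) F)) with hφ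
  have hinj : Function.Injective φ := IsFractionRing.injective _ _
  have hx : ∀ s : Fin n, φ (MvPolynomial.X s) ≠ 0 := by
    intro s
    simp only [ne_eq, map_eq_zero_iff φ hinj]
    exact MvPolynomial.X_ne_zero s
  have split : ∀ (c : Fin n → ℤ),
      (∏ s, φ (MvPolynomial.X s) ^ (c s))
        = (∏ s, φ (MvPolynomial.X s) ^ ((c s).toNat))
          / (∏ s, φ (MvPolynomial.X s) ^ ((-(c s)).toNat)) := by
    intro c
    rw [← Finset.prod_div_distrib]
    refine Finset.prod_congr rfl fun s _ => ?_
    rw [← zpow_natCast (φ (MvPolynomial.X s)) ((c s).toNat),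
      ← zpow_natCast (φ (MvPolynomial.X s)) ((-(c s)).toNat), ← zpow_sub₀ (hx s)]
    congr 1
    omega
  rw [split, split] at h
  have hne : ∀ c : Fin n → ℕ, (∏ s, φ (MvPolynomial.X s) ^ (c s)) ≠ 0 :=
    fun c => Finset.prod_ne_zero_iff.mpr fun s _ => pow_ne_zero _ (hx s)
  rw [div_eq_div_iff (hne _) (hne _)] at h
  rw [← Finset.prod_mul_distrib, ← Finset.prod_mul_distrib] at h
  simp only [← pow_add] at h
  have h2 : (∏ s, (MvPolynomial.X s : MvPolynomial (Fin n) F) ^ ((v s).toNat + (-(w s)).toNat))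
      = ∏ s, (MvPolynomial.X s : MvPolynomial (Fin n) F) ^ ((w s).toNat + (-(v s)).toNat) := by
    apply hinj
    rw [map_prod, map_prod]
    simpa only [map_pow] using h
  have h3 := congrFun (aux_mv_pow_inj _ _ h2)
  funext s
  have := h3 s
  omega

/-- A common root in the algebraic closure shows two polynomials are not coprime. -/
lemma aux_not_coprime_of_common_root {K : Type*} [Field K] {p q : K[X]}
    (α : AlgebraicClosure K) (hp : Polynomial.aeval α p = 0) (hq : Polynomial.aeval α q = 0) :
    ¬ IsCoprime p q := by
  rintro ⟨u, w, huw⟩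
  have := congrArg (Polynomial.aeval α) huw
  simp only [map_add, map_mul, hp, hq, mul_zero, add_zero, map_one] at this
  exact one_ne_zero this.symm

/-- Non-coprime polynomials over a field have a common root in the algebraic closure. -/
lemma aux_common_root_of_not_coprime {K : Type*} [Field K] {p q : K[X]} (hp : p ≠ 0)
    (h : ¬ IsCoprime p q) :
    ∃ α : AlgebraicClosure K, Polynomial.aeval α p = 0 ∧ Polynomial.aeval α q = 0 := by
  classical
  set g := EuclideanDomain.gcd p q with hg
  have hgu : ¬ IsUnit g := fun hu => h (EuclideanDomain.gcd_isUnit_iff.mp hu)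
  have hg0 : g ≠ 0 := fun h0 => hp (EuclideanDomain.gcd_eq_zero_iff.mp h0).1
  have hdeg : 0 < g.degree := Polynomial.degree_pos_of_ne_zero_of_nonunit hg0 hgu
  have hdeg' : (g.map (algebraMap K (AlgebraicClosure K))).degree ≠ 0 := by
    rw [Polynomial.degree_map]
    exact hdeg.ne'
  obtain ⟨α, hα⟩ := IsAlgClosed.exists_root _ hdeg'
  have hαg : Polynomial.aeval α g = 0 := by
    rwa [Polynomial.aeval_def, ← Polynomial.eval_map]
  refine ⟨α, ?_, ?_⟩
  · obtain ⟨c, hc⟩ := EuclideanDomain.gcd_dvd_left p q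
    rw [hc, map_mul, hαg, zero_mul]
  · obtain ⟨c, hc⟩ := EuclideanDomain.gcd_dvd_right p q
    rw [hc, map_mul, hαg, zero_mul]

end Aux
/-- Forward direction: non-coprimality of binomials with Laurent monomial constant terms
forces a proportionality between exponent vectors. -/
lemma aux_forward {F : Type*} [Field F] {n : ℕ} (j₁ j : ℕ) (hj₁ : 0 < j₁)
    (z₁ z : FractionRing (MvPolynomial (Fin n) F)) (v₁ v : Fin n → ℤ)
    (hv₁ : z₁ = ∏ s, (algebraMap (MvPolynomial (Fin n) F)
      (FractionRing (MvPolynomial (Fin n) F)) (MvPolynomial.X s)) ^ (v₁ s))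
    (hv : z = ∏ s, (algebraMap (MvPolynomial (Fin n) F)
      (FractionRing (MvPolynomial (Fin n) F)) (MvPolynomial.X s)) ^ (v s))
    (h : ¬ IsCoprime (X ^ j₁ - C z₁ : (FractionRing (MvPolynomial (Fin n) F))[X])
      (X ^ j - C z)) :
    ∀ s, v₁ s * (j : ℤ) = v s * (j₁ : ℤ) := by
  set φ := algebraMap (MvPolynomial (Fin n) F) (FractionRing (MvPolynomial (Fin n) F)) with hφ
  have hinj : Function.Injective φ := IsFractionRing.injective _ _
  have hx : ∀ s : Fin n, φ (MvPolynomial.X s) ≠ 0 := by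
    intro s
    simp only [ne_eq, map_eq_zero_iff φ hinj]
    exact MvPolynomial.X_ne_zero s
  obtain ⟨α, hα1, hα2⟩ :=
    aux_common_root_of_not_coprime (X_pow_sub_C_ne_zero hj₁ z₁) h
  simp only [map_sub, map_pow, aeval_X, aeval_C, sub_eq_zero] at hα1 hα2
  have hψinj : Function.Injective (algebraMap (FractionRing (MvPolynomial (Fin n) F))
      (AlgebraicClosure (FractionRing (MvPolynomial (Fin n) F)))) := RingHom.injective _
  have hzz : z₁ ^ j = z ^ j₁ := by
    apply hψinj
    rw [map_pow, map_pow, ← hα1, ← hα2, ← pow_mul, ← pow_mul, Nat.mul_comm]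
  rw [hv₁, hv, ← Finset.prod_pow, ← Finset.prod_pow] at hzz
  have hzz' : (∏ s, φ (MvPolynomial.X s) ^ (v₁ s * (j : ℤ)))
      = ∏ s, φ (MvPolynomial.X s) ^ (v s * (j₁ : ℤ)) :=
    calc (∏ s, φ (MvPolynomial.X s) ^ (v₁ s * (j : ℤ)))
        = ∏ s, (φ (MvPolynomial.X s) ^ (v₁ s)) ^ j :=
          Finset.prod_congr rfl fun s _ => (aux_zpow_pow (hx s) _ _).symm
      _ = ∏ s, (φ (MvPolynomial.X s) ^ (v s)) ^ j₁ := hzz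
      _ = ∏ s, φ (MvPolynomial.X s) ^ (v s * (j₁ : ℤ)) :=
          Finset.prod_congr rfl fun s _ => aux_zpow_pow (hx s) _ _
  exact fun s => congrFun (aux_zpow_monomial_inj _ _ hzz') s

/-- Backward direction: proportional exponent vectors force non-coprimality. -/
lemma aux_backward {F : Type*} [Field F] {n : ℕ} (j₂ j₃ : ℕ) (hj₂ : 0 < j₂) (hj₃ : 0 < j₃)
    (z₂ z₃ : FractionRing (MvPolynomial (Fin n) F)) (v₂ v₃ : Fin n → ℤ)
    (hv₂ : z₂ = ∏ s, (algebraMap (MvPolynomial (Fin n) F)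
      (FractionRing (MvPolynomial (Fin n) F)) (MvPolynomial.X s)) ^ (v₂ s))
    (hv₃ : z₃ = ∏ s, (algebraMap (MvPolynomial (Fin n) F)
      (FractionRing (MvPolynomial (Fin n) F)) (MvPolynomial.X s)) ^ (v₃ s))
    (key : ∀ s, v₂ s * (j₃ : ℤ) = v₃ s * (j₂ : ℤ)) :
    ¬ IsCoprime (X ^ j₂ - C z₂ : (FractionRing (MvPolynomial (Fin n) F))[X])
      (X ^ j₃ - C z₃) := by
  set φ := algebraMap (MvPolynomial (Fin n) F) (FractionRing (MvPolynomial (Fin n) F)) with hφ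
  have hinj : Function.Injective φ := IsFractionRing.injective _ _
  have hx : ∀ s : Fin n, φ (MvPolynomial.X s) ≠ 0 := by
    intro s
    simp only [ne_eq, map_eq_zero_iff φ hinj]
    exact MvPolynomial.X_ne_zero s
  set d := Nat.gcd j₂ j₃ with hd
  have hdpos : 0 < d := Nat.gcd_pos_of_pos_left _ hj₂
  set a := j₂ / d with ha
  set b := j₃ / d with hb
  have hj₂' : a * d = j₂ := Nat.div_mul_cancel (Nat.gcd_dvd_left j₂ j₃)
  have hj₃' : b * d = j₃ := Nat.div_mul_cancel (Nat.gcd_dvd_right j₂ j₃)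
  have hab : Nat.Coprime a b := Nat.coprime_div_gcd_div_gcd hdpos
  have hapos : 0 < a := Nat.div_pos (Nat.le_of_dvd hj₂ (Nat.gcd_dvd_left j₂ j₃)) hdpos
  have hane : (a : ℤ) ≠ 0 := by exact_mod_cast hapos.ne'
  have hdne : (d : ℤ) ≠ 0 := by exact_mod_cast hdpos.ne'
  have e2 : (j₂ : ℤ) = (a : ℤ) * d := by exact_mod_cast hj₂'.symm
  have e3 : (j₃ : ℤ) = (b : ℤ) * d := by exact_mod_cast hj₃'.symm
  have hba : ∀ s, v₂ s * (b : ℤ) = v₃ s * (a : ℤ) := by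
    intro s
    have h := key s
    have h2 : (v₂ s * b) * d = (v₃ s * a) * d := by
      linear_combination h - v₂ s * e3 + v₃ s * e2
    exact mul_right_cancel₀ hdne h2
  have hdvd : ∀ s, (a : ℤ) ∣ v₂ s := by
    intro s
    refine Int.dvd_of_dvd_mul_right_of_gcd_one (b := (b : ℤ)) ?_ ?_
    · exact ⟨v₃ s, by linear_combination (hba s)⟩
    · rw [Int.gcd_natCast_natCast]; exact hab
  set w : Fin n → ℤ := fun s => v₂ s / a with hwdef
  have hw2 : ∀ s, v₂ s = (a : ℤ) * w s := fun s => (Int.mul_ediv_cancel' (hdvd s)).symm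
  have hw3 : ∀ s, v₃ s = (b : ℤ) * w s := by
    intro s
    have h := hba s
    rw [hw2 s] at h
    have h2 : (v₃ s) * a = ((b : ℤ) * w s) * a := by linear_combination -h
    exact mul_right_cancel₀ hane h2
  have hdeg : ((X : (AlgebraicClosure (FractionRing (MvPolynomial (Fin n) F)))[X]) ^ d
      - C (algebraMap (FractionRing (MvPolynomial (Fin n) F))
        (AlgebraicClosure (FractionRing (MvPolynomial (Fin n) F)))
          (∏ s, φ (MvPolynomial.X s) ^ w s))).degree ≠ 0 := by
    rw [Polynomial.degree_X_pow_sub_C hdpos]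
    exact_mod_cast hdpos.ne'
  obtain ⟨γ, hγ⟩ := IsAlgClosed.exists_root _ hdeg
  have hγd : γ ^ d = algebraMap (FractionRing (MvPolynomial (Fin n) F))
      (AlgebraicClosure (FractionRing (MvPolynomial (Fin n) F)))
        (∏ s, φ (MvPolynomial.X s) ^ w s) := by
    have h := hγ
    simp only [Polynomial.IsRoot, eval_sub, eval_pow, eval_X, eval_C, sub_eq_zero] at h
    exact h
  have hcompute : ∀ (jj aa : ℕ) (vv : Fin n → ℤ)
      (zz : FractionRing (MvPolynomial (Fin n) F)), aa * d = jj →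
      (∀ s, vv s = (aa : ℤ) * w s) →
      zz = ∏ s, φ (MvPolynomial.X s) ^ vv s →
      γ ^ jj = algebraMap (FractionRing (MvPolynomial (Fin n) F))
        (AlgebraicClosure (FractionRing (MvPolynomial (Fin n) F))) zz := by
    intro jj aa vv zz hjj hvv hzz
    rw [← hjj, pow_mul', hγd, ← map_pow, hzz]
    congr 1
    rw [← Finset.prod_pow]
    refine Finset.prod_congr rfl fun s _ => ?_
    rw [aux_zpow_pow (hx s) (w s) aa, hvv s, mul_comm]
  have hz2 := hcompute j₂ a v₂ z₂ hj₂' hw2 hv₂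
  have hz3 := hcompute j₃ b v₃ z₃ hj₃' hw3 hv₃
  apply aux_not_coprime_of_common_root γ
  · simp only [map_sub, map_pow, aeval_X, aeval_C, hz2, sub_self]
  · simp only [map_sub, map_pow, aeval_X, aeval_C, hz3, sub_self]

/-- Over the field `K` of rational functions in `x₁, …, xₙ`, if the `z t` are Laurent
monomials and `X^{j₁} - z₁` fails to be coprime to both `X^{j₂} - z₂` and `X^{j₃} - z₃`,
then `X^{j₂} - z₂` and `X^{j₃} - z₃` are not coprime either. -/
theorem not_coprime_trans_of_monomials {F : Type*} [Field F] (n : ℕ)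
    (j₁ j₂ j₃ : ℕ) (hj₁ : 0 < j₁) (hj₂ : 0 < j₂) (hj₃ : 0 < j₃)
    (z₁ z₂ z₃ : FractionRing (MvPolynomial (Fin n) F))
    (hm₁ : ∃ v : Fin n → ℤ, z₁ = ∏ s, (algebraMap (MvPolynomial (Fin n) F)
      (FractionRing (MvPolynomial (Fin n) F)) (MvPolynomial.X s)) ^ (v s))
    (hm₂ : ∃ v : Fin n → ℤ, z₂ = ∏ s, (algebraMap (MvPolynomial (Fin n) F)
      (FractionRing (MvPolynomial (Fin n) F)) (MvPolynomial.X s)) ^ (v s))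
    (hm₃ : ∃ v : Fin n → ℤ, z₃ = ∏ s, (algebraMap (MvPolynomial (Fin n) F)
      (FractionRing (MvPolynomial (Fin n) F)) (MvPolynomial.X s)) ^ (v s))
    (h₁₂ : ¬ IsCoprime (X ^ j₁ - C z₁ : (FractionRing (MvPolynomial (Fin n) F))[X])
      (X ^ j₂ - C z₂))
    (h₁₃ : ¬ IsCoprime (X ^ j₁ - C z₁ : (FractionRing (MvPolynomial (Fin n) F))[X])
      (X ^ j₃ - C z₃)) :
    ¬ IsCoprime (X ^ j₂ - C z₂ : (FractionRing (MvPolynomial (Fin n) F))[X])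
      (X ^ j₃ - C z₃) := by
  obtain ⟨v₁, hv₁⟩ := hm₁
  obtain ⟨v₂, hv₂⟩ := hm₂
  obtain ⟨v₃, hv₃⟩ := hm₃
  have key12 := aux_forward j₁ j₂ hj₁ z₁ z₂ v₁ v₂ hv₁ hv₂ h₁₂
  have key13 := aux_forward j₁ j₃ hj₁ z₁ z₃ v₁ v₃ hv₁ hv₃ h₁₃
  have hj₁' : (j₁ : ℤ) ≠ 0 := by exact_mod_cast hj₁.ne'
  have key23 : ∀ s, v₂ s * (j₃ : ℤ) = v₃ s * (j₂ : ℤ) := by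
    intro s
    have h12 := key12 s
    have h13 := key13 s
    have h2 : (v₂ s * j₃) * j₁ = (v₃ s * j₂) * j₁ := by
      linear_combination (j₂ : ℤ) * h13 - (j₃ : ℤ) * h12
    exact mul_right_cancel₀ hj₁' h2
  exact aux_backward j₂ j₃ hj₂ hj₃ z₂ z₃ v₂ v₃ hv₂ hv₃ key23
end

section
/- In the ring of formal power series $\mathbb{Z}[[x_1,x_2,x_3]]$ in three variables, let $S$ be the power series whose coefficient of $x_1^a x_2^b x_3^c$ is $1$ if the triple $(a,b,c) \in \mathbb{N}^3$ satisfies the triangle inequalities $a + b \geq c$, $b + c \geq a$, and $c + a \geq b$, and $0$ otherwise. Then $$S \cdot (1 - x_1 x_3)(1 - x_1 x_2)(1 - x_2 x_3) = 1 + x_1 x_2 x_3,$$ i.e., the generating function of all nonnegative integer triangles is $\dfrac{1 + x_1 x_2 x_3}{(1 - x_1 x_3)(1 - x_2 x_1)(1 - x_2 x_3)}$. -/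
open MvPowerSeries Finsupp in
private def TriInd (a b c : ℕ) : ℤ := if c ≤ a + b ∧ a ≤ b + c ∧ b ≤ c + a then 1 else 0

set_option maxHeartbeats 1000000 in
private lemma triInd_key (a b c : ℕ) :
    TriInd a b c
      - (if 1 ≤ a ∧ 1 ≤ c then TriInd (a-1) b (c-1) else 0)
      - (if 1 ≤ a ∧ 1 ≤ b then TriInd (a-1) (b-1) c else 0)
      - (if 1 ≤ b ∧ 1 ≤ c then TriInd a (b-1) (c-1) else 0)
      + (if 2 ≤ a ∧ 1 ≤ b ∧ 1 ≤ c then TriInd (a-2) (b-1) (c-1) else 0)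
      + (if 1 ≤ a ∧ 1 ≤ b ∧ 2 ≤ c then TriInd (a-1) (b-1) (c-2) else 0)
      + (if 1 ≤ a ∧ 2 ≤ b ∧ 1 ≤ c then TriInd (a-1) (b-2) (c-1) else 0)
      - (if 2 ≤ a ∧ 2 ≤ b ∧ 2 ≤ c then TriInd (a-2) (b-2) (c-2) else 0)
    = (if a = 0 ∧ b = 0 ∧ c = 0 then 1 else 0)
      + (if a = 1 ∧ b = 1 ∧ c = 1 then 1 else 0) := by
  rcases a with _|_|a <;> rcases b with _|_|b <;> rcases c with _|_|c <;>
    simp only [TriInd] <;> norm_num <;> split_ifs <;> omega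

private lemma finsupp_le3 (e d : Fin 3 →₀ ℕ) :
    e ≤ d ↔ e 0 ≤ d 0 ∧ e 1 ≤ d 1 ∧ e 2 ≤ d 2 := by
  rw [Finsupp.le_def]
  exact ⟨fun h => ⟨h 0, h 1, h 2⟩, fun ⟨h0,h1,h2⟩ i => by fin_cases i <;> assumption⟩

private lemma finsupp_eq3 (d e : Fin 3 →₀ ℕ) :
    d = e ↔ d 0 = e 0 ∧ d 1 = e 1 ∧ d 2 = e 2 := by
  rw [Finsupp.ext_iff]
  exact ⟨fun h => ⟨h 0, h 1, h 2⟩, fun ⟨h0,h1,h2⟩ i => by fin_cases i <;> assumption⟩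

/-- The generating function of nonnegative integer triangles is
`(1 + x₁x₂x₃)/((1 - x₁x₃)(1 - x₁x₂)(1 - x₂x₃))`: if `S ∈ ℤ[[x₁,x₂,x₃]]` has coefficient
`1` on `x₁^a x₂^b x₃^c` exactly when `(a,b,c)` satisfies the triangle inequalities,
then `S·(1 - x₁x₃)(1 - x₁x₂)(1 - x₂x₃) = 1 + x₁x₂x₃`. -/
theorem triangle_generating_function (S : MvPowerSeries (Fin 3) ℤ)
    (hS : ∀ d : Fin 3 →₀ ℕ,
      MvPowerSeries.coeff d S =
        if d 2 ≤ d 0 + d 1 ∧ d 0 ≤ d 1 + d 2 ∧ d 1 ≤ d 2 + d 0 then 1 else 0) :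
    S * ((1 - MvPowerSeries.X 0 * MvPowerSeries.X 2) *
          (1 - MvPowerSeries.X 0 * MvPowerSeries.X 1) *
          (1 - MvPowerSeries.X 1 * MvPowerSeries.X 2)) =
      1 + MvPowerSeries.X 0 * MvPowerSeries.X 1 * MvPowerSeries.X 2 := by
  open MvPowerSeries Finsupp in
  have hA : (MvPowerSeries.X 0 * MvPowerSeries.X 2 : MvPowerSeries (Fin 3) ℤ)
      = monomial (single 0 1 + single 2 1) 1 := by
    rw [X, X, monomial_mul_monomial, one_mul]
  open MvPowerSeries Finsupp in
  have hB : (MvPowerSeries.X 0 * MvPowerSeries.X 1 : MvPowerSeries (Fin 3) ℤ)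
      = monomial (single 0 1 + single 1 1) 1 := by
    rw [X, X, monomial_mul_monomial, one_mul]
  open MvPowerSeries Finsupp in
  have hC : (MvPowerSeries.X 1 * MvPowerSeries.X 2 : MvPowerSeries (Fin 3) ℤ)
      = monomial (single 1 1 + single 2 1) 1 := by
    rw [X, X, monomial_mul_monomial, one_mul]
  have hX2 : (MvPowerSeries.X 2 : MvPowerSeries (Fin 3) ℤ)
      = MvPowerSeries.monomial (Finsupp.single 2 1) 1 := rfl
  have hmm : ∀ m n : Fin 3 →₀ ℕ,
      (MvPowerSeries.monomial m 1 : MvPowerSeries (Fin 3) ℤ) * MvPowerSeries.monomial n 1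
        = MvPowerSeries.monomial (m + n) 1 := by
    intro m n; rw [MvPowerSeries.monomial_mul_monomial, one_mul]
  set A := (MvPowerSeries.X 0 * MvPowerSeries.X 2 : MvPowerSeries (Fin 3) ℤ)
  set B := (MvPowerSeries.X 0 * MvPowerSeries.X 1 : MvPowerSeries (Fin 3) ℤ)
  set C := (MvPowerSeries.X 1 * MvPowerSeries.X 2 : MvPowerSeries (Fin 3) ℤ)
  have expand0 : S * ((1 - A) * (1 - B) * (1 - C))
      = S - S*A - S*B - S*C + S*(A*B) + S*(A*C) + S*(B*C) - S*(A*(B*C)) := by ring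
  rw [expand0]
  simp only [hA, hB, hC, hX2, hmm]
  ext d
  simp only [map_sub, map_add, MvPowerSeries.coeff_mul_monomial, mul_one,
    MvPowerSeries.coeff_one, MvPowerSeries.coeff_monomial, hS]
  have hT : ∀ e : Fin 3 →₀ ℕ,
      (if e 2 ≤ e 0 + e 1 ∧ e 0 ≤ e 1 + e 2 ∧ e 1 ≤ e 2 + e 0 then (1:ℤ) else 0)
        = TriInd (e 0) (e 1) (e 2) := fun e => rfl
  rw [hT, hT, hT, hT, hT, hT, hT, hT]
  simp only [finsupp_le3, finsupp_eq3, Finsupp.tsub_apply, Finsupp.add_apply,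
    Finsupp.single_apply, Finsupp.coe_zero, Pi.zero_apply]
  norm_num [Fin.ext_iff]
  exact triInd_key (d 0) (d 1) (d 2)
end

section
/- Let $k \geq 3$ be an integer. In the ring of formal power series $\mathbb{Q}[[x_1,\dots,x_k]]$, let $S$ be the series whose coefficient of $x_1^{b_1} \cdots x_k^{b_k}$ is $1$ if the tuple $(b_1,\dots,b_k) \in \mathbb{N}^k$ satisfies $$(k-3) + \sum_{i=1}^{k-2} (k-1-i)\, b_i \;\geq\; b_k,$$ and $0$ otherwise. Then $$S = \prod_{i=1}^{k} (1 - x_i)^{-1} \; - \; x_k^{\,k-2}\,(1 - x_k)^{-1}(1 - x_{k-1})^{-1} \prod_{i=1}^{k-2} \big(1 - x_i x_k^{\,k-1-i}\big)^{-1},$$ where each inverted factor is a unit of the power series ring (its constant term is $1$). -/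
open MvPowerSeries Finsupp Finset
set_option linter.unusedSectionVars false

variable {σ : Type*} [DecidableEq σ]

lemma coeff_mul_one_sub_monomial (C : MvPowerSeries σ ℚ) (e d : σ →₀ ℕ) :
    coeff d (C * (1 - monomial e 1)) =
      coeff d C - if e ≤ d then coeff (d - e) C else 0 := by
  rw [mul_sub, mul_one, map_sub, coeff_mul_monomial]
  split <;> simp

lemma constCoeff_one_sub_monomial {e : σ →₀ ℕ} (he : e ≠ 0) :
    constantCoeff (1 - monomial e (1:ℚ)) ≠ 0 := by
  rw [map_sub, constantCoeff_one, ← coeff_zero_eq_constantCoeff, coeff_monomial,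
    if_neg (fun h => he h.symm)]
  norm_num

lemma prod_mul_prod_inv {ι : Type*} (s : Finset ι) (f : ι → MvPowerSeries σ ℚ)
    (h : ∀ i ∈ s, constantCoeff (f i) ≠ 0) :
    (∏ i ∈ s, f i) * ∏ i ∈ s, (f i)⁻¹ = 1 := by
  rw [← Finset.prod_mul_distrib]
  exact Finset.prod_eq_one fun i hi => MvPowerSeries.mul_inv_cancel _ (h i hi)

def Aser (s : Finset σ) : MvPowerSeries σ ℚ :=
  fun d => if d.support ⊆ s then 1 else 0

lemma coeff_Aser (s : Finset σ) (d : σ →₀ ℕ) :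
    coeff d (Aser s) = if d.support ⊆ s then 1 else 0 := rfl

lemma Aser_mul (j : σ) (s : Finset σ) (hj : j ∉ s) :
    Aser (insert j s) * (1 - monomial (single j 1) 1) = Aser s := by
  ext d
  rw [coeff_mul_one_sub_monomial, coeff_Aser, coeff_Aser, coeff_Aser]
  by_cases hmem : j ∈ d.support
  · have hle : single j 1 ≤ d := by
      rw [Finsupp.single_le_iff]
      have := Finsupp.mem_support_iff.mp hmem
      omega
    have hiff : (d - single j 1).support ⊆ insert j s ↔ d.support ⊆ insert j s := by
      constructor
      · intro h i hi
        rcases eq_or_ne i j with rfl | hij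
        · exact mem_insert_self _ _
        · apply h
          rw [Finsupp.mem_support_iff, Finsupp.tsub_apply, Finsupp.single_apply,
            if_neg (Ne.symm hij)]
          have := Finsupp.mem_support_iff.mp hi
          omega
      · intro h i hi
        exact h (Finsupp.support_tsub hi)
    rw [if_pos hle, if_congr hiff rfl rfl, sub_self,
      if_neg (show ¬d.support ⊆ s from fun h => hj (h hmem))]
  · have hle : ¬ single j 1 ≤ d := by
      rw [Finsupp.single_le_iff]
      have := Finsupp.notMem_support_iff.mp hmem
      omega
    rw [if_neg hle, sub_zero]
    exact if_congr (Finset.subset_insert_iff_of_notMem hmem) rfl rfl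

lemma prod_inv_A (s : Finset σ) :
    (∏ i ∈ s, ((1 : MvPowerSeries σ ℚ) - X i)⁻¹) = Aser s := by
  induction s using Finset.induction_on with
  | empty =>
    rw [Finset.prod_empty]
    ext d
    rw [coeff_Aser, coeff_one]
    exact if_congr (by simp [Finset.subset_empty, Finsupp.support_eq_empty]) rfl rfl
  | @insert j s hj ih =>
    rw [Finset.prod_insert hj, ih, ← Aser_mul j s hj, X_def, mul_comm, mul_assoc,
      MvPowerSeries.mul_inv_cancel _ (constCoeff_one_sub_monomial
        (fun h => one_ne_zero (Finsupp.single_eq_zero.mp h))), mul_one]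

set_option maxHeartbeats 1000000

section Bpart

variable {k : ℕ}

def kap (hk : 3 ≤ k) : Fin k := ⟨k-1, (by omega : k - 1 < k + 0)⟩
def kap' (hk : 3 ≤ k) : Fin k := ⟨k-2, (by omega : k - 2 < k + 0)⟩
def emb (hk : 3 ≤ k) : Fin (k-2) → Fin k := Fin.castLE (by omega : k - 2 ≤ k + 0)

lemma emb_ne_kap (hk : 3 ≤ k) (t : Fin (k-2)) : emb hk t ≠ kap hk := by
  have h1 := t.isLt
  intro h
  have h2 : (t : ℕ) = k - 1 := congrArg Fin.val h
  omega

lemma emb_ne_kap' (hk : 3 ≤ k) (t : Fin (k-2)) : emb hk t ≠ kap' hk := by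
  have h1 := t.isLt
  intro h
  have h2 : (t : ℕ) = k - 2 := congrArg Fin.val h
  omega

lemma kap_ne_kap' (hk : 3 ≤ k) : kap hk ≠ kap' hk := by
  intro h
  have h2 : k - 1 = k - 2 := congrArg Fin.val h
  omega

lemma emb_inj (hk : 3 ≤ k) {u t : Fin (k-2)} (h : emb hk u = emb hk t) : u = t := by
  have h' : (emb hk u).val = (emb hk t).val := congrArg Fin.val h
  exact Fin.ext h'

noncomputable def Cser (hk : 3 ≤ k) (s : Finset (Fin (k-2))) : MvPowerSeries (Fin k) ℚ :=
  fun d => if d (kap hk) = (k-2) + ∑ t ∈ s, (k-2-(t:ℕ)) * d (emb hk t)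
              ∧ d (kap' hk) = 0 ∧ ∀ t ∉ s, d (emb hk t) = 0 then 1 else 0

lemma coeff_Cser (hk : 3 ≤ k) (s : Finset (Fin (k-2))) (d : Fin k →₀ ℕ) :
    coeff d (Cser hk s) =
      if d (kap hk) = (k-2) + ∑ t ∈ s, (k-2-(t:ℕ)) * d (emb hk t)
          ∧ d (kap' hk) = 0 ∧ ∀ t ∉ s, d (emb hk t) = 0 then 1 else 0 := rfl

noncomputable def Bser (hk : 3 ≤ k) : MvPowerSeries (Fin k) ℚ :=
  fun d => if (k-2) + ∑ t : Fin (k-2), (k-2-(t:ℕ)) * d (emb hk t) ≤ d (kap hk) then 1 else 0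

lemma coeff_Bser (hk : 3 ≤ k) (d : Fin k →₀ ℕ) :
    coeff d (Bser hk) =
      if (k-2) + ∑ t : Fin (k-2), (k-2-(t:ℕ)) * d (emb hk t) ≤ d (kap hk) then 1 else 0 := rfl

noncomputable def B1ser (hk : 3 ≤ k) : MvPowerSeries (Fin k) ℚ :=
  fun d => if d (kap hk) = (k-2) + ∑ t : Fin (k-2), (k-2-(t:ℕ)) * d (emb hk t) then 1 else 0

lemma coeff_B1ser (hk : 3 ≤ k) (d : Fin k →₀ ℕ) :
    coeff d (B1ser hk) =
      if d (kap hk) = (k-2) + ∑ t : Fin (k-2), (k-2-(t:ℕ)) * d (emb hk t) then 1 else 0 := rfl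

end Bpart

section Bmul
variable {k : ℕ}

lemma Bser_mul (hk : 3 ≤ k) :
    Bser hk * (1 - monomial (single (kap hk) 1) 1) = B1ser hk := by
  ext d
  rw [coeff_mul_one_sub_monomial, coeff_Bser, coeff_Bser, coeff_B1ser]
  have h1 : ∀ t : Fin (k-2), ((d - single (kap hk) 1 : Fin k →₀ ℕ)) (emb hk t) = d (emb hk t) := fun t => by
    rw [Finsupp.tsub_apply, Finsupp.single_apply, if_neg (fun h => emb_ne_kap hk t h.symm)]
    exact Nat.sub_zero _
  have h2 : ((d - single (kap hk) 1 : Fin k →₀ ℕ)) (kap hk) = d (kap hk) - 1 := by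
    rw [Finsupp.tsub_apply, Finsupp.single_eq_same]
  simp only [h1, h2, Finsupp.single_le_iff]
  split_ifs <;> first | (exfalso; omega) | norm_num

lemma B1ser_mul (hk : 3 ≤ k) :
    B1ser hk * (1 - monomial (single (kap' hk) 1) 1) = Cser hk Finset.univ := by
  ext d
  rw [coeff_mul_one_sub_monomial, coeff_B1ser, coeff_B1ser, coeff_Cser]
  have h1 : ∀ t : Fin (k-2), ((d - single (kap' hk) 1 : Fin k →₀ ℕ)) (emb hk t) = d (emb hk t) := fun t => by
    rw [Finsupp.tsub_apply, Finsupp.single_apply, if_neg (fun h => emb_ne_kap' hk t h.symm)]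
    exact Nat.sub_zero _
  have h2 : ((d - single (kap' hk) 1 : Fin k →₀ ℕ)) (kap hk) = d (kap hk) := by
    rw [Finsupp.tsub_apply, Finsupp.single_apply, if_neg (fun h => kap_ne_kap' hk h.symm), Nat.sub_zero]
  simp only [h1, h2, Finsupp.single_le_iff, Finset.mem_univ, not_true, false_implies, implies_true, and_true]
  split_ifs <;> first | (exfalso; omega) | norm_num

end Bmul

section Cmul
variable {k : ℕ}

lemma Cser_mul (hk : 3 ≤ k) (s : Finset (Fin (k-2))) (t : Fin (k-2)) (ht : t ∈ s) :
    Cser hk s * (1 - monomial (single (emb hk t) 1 + single (kap hk) (k-2-(t:ℕ))) 1)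
      = Cser hk (s.erase t) := by
  classical
  ext d
  set e : Fin k →₀ ℕ := single (emb hk t) 1 + single (kap hk) (k-2-(t:ℕ)) with hedef
  rw [coeff_mul_one_sub_monomial, coeff_Cser, coeff_Cser, coeff_Cser]
  have het : e (emb hk t) = 1 := by
    rw [hedef, Finsupp.add_apply, Finsupp.single_eq_same, Finsupp.single_apply,
      if_neg (fun h => emb_ne_kap hk t h.symm)]
    omega
  have heκ : e (kap hk) = k-2-(t:ℕ) := by
    rw [hedef, Finsupp.add_apply, Finsupp.single_eq_same, Finsupp.single_apply,
      if_neg (fun h => emb_ne_kap hk t h)]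
    omega
  have heu : ∀ u : Fin (k-2), u ≠ t → e (emb hk u) = 0 := fun u hu => by
    rw [hedef, Finsupp.add_apply, Finsupp.single_apply,
      if_neg (fun h => hu (emb_inj hk h.symm)), Finsupp.single_apply,
      if_neg (fun h => emb_ne_kap hk u h.symm)]
    omega
  have heκ' : e (kap' hk) = 0 := by
    rw [hedef, Finsupp.add_apply, Finsupp.single_apply,
      if_neg (fun h => emb_ne_kap' hk t h), Finsupp.single_apply,
      if_neg (fun h => kap_ne_kap' hk h)]
    omega
  have hle : e ≤ d ↔ 1 ≤ d (emb hk t) ∧ k-2-(t:ℕ) ≤ d (kap hk) := by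
    constructor
    · intro h
      exact ⟨het ▸ Finsupp.le_def.mp h (emb hk t), heκ ▸ Finsupp.le_def.mp h (kap hk)⟩
    · rintro ⟨h1, h2⟩
      rw [Finsupp.le_def]
      intro i
      by_cases hi1 : i = emb hk t
      · subst hi1; rw [het]; exact h1
      by_cases hi2 : i = kap hk
      · subst hi2; rw [heκ]; exact h2
      have : e i = 0 := by
        rw [hedef, Finsupp.add_apply, Finsupp.single_apply, if_neg (fun h => hi1 h.symm),
          Finsupp.single_apply, if_neg (fun h => hi2 h.symm)]
        omega
      rw [this]; exact Nat.zero_le _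
  have hdeu : ∀ u : Fin (k-2), u ≠ t →
      ((d - e : Fin k →₀ ℕ)) (emb hk u) = d (emb hk u) := fun u hu => by
    rw [Finsupp.tsub_apply, heu u hu, Nat.sub_zero]
  have hdet : ((d - e : Fin k →₀ ℕ)) (emb hk t) = d (emb hk t) - 1 := by
    rw [Finsupp.tsub_apply, het]
  have hdeκ : ((d - e : Fin k →₀ ℕ)) (kap hk) = d (kap hk) - (k-2-(t:ℕ)) := by
    rw [Finsupp.tsub_apply, heκ]
  have hdeκ' : ((d - e : Fin k →₀ ℕ)) (kap' hk) = d (kap' hk) := by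
    rw [Finsupp.tsub_apply, heκ', Nat.sub_zero]
  have hsum_s_d : ∑ u ∈ s, (k-2-(u:ℕ)) * d (emb hk u)
      = (k-2-(t:ℕ)) * d (emb hk t) + ∑ u ∈ s.erase t, (k-2-(u:ℕ)) * d (emb hk u) :=
    (Finset.add_sum_erase s _ ht).symm
  have hsum_s_de : ∑ u ∈ s, (k-2-(u:ℕ)) * ((d - e : Fin k →₀ ℕ)) (emb hk u)
      = ((k-2-(t:ℕ)) * d (emb hk t) - (k-2-(t:ℕ)))
          + ∑ u ∈ s.erase t, (k-2-(u:ℕ)) * d (emb hk u) := by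
    rw [← Finset.add_sum_erase s _ ht, hdet, Nat.mul_sub_one]
    congr 1
    exact Finset.sum_congr rfl fun u hu => by rw [hdeu u (Finset.ne_of_mem_erase hu)]
  have hforall : (∀ u ∉ s, ((d - e : Fin k →₀ ℕ)) (emb hk u) = 0)
      ↔ (∀ u ∉ s, d (emb hk u) = 0) := by
    refine forall_congr' fun u => ?_
    refine imp_congr_right fun hu => ?_
    rw [hdeu u (fun h => hu (h ▸ ht))]
  have hQ' : (∀ u ∉ s.erase t, d (emb hk u) = 0)
      ↔ ((∀ u ∉ s, d (emb hk u) = 0) ∧ d (emb hk t) = 0) := by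
    constructor
    · intro h
      exact ⟨fun u hu => h u (fun hh => hu (Finset.mem_of_mem_erase hh)),
        h t (Finset.notMem_erase t s)⟩
    · rintro ⟨hq, ha⟩ u hu
      rcases eq_or_ne u t with rfl | hut
      · exact ha
      · exact hq u (fun h => hu (Finset.mem_erase_of_ne_of_mem hut h))
  have hP0 : d (emb hk t) = 0 → (k-2-(t:ℕ)) * d (emb hk t) = 0 := fun h => by
    rw [h, Nat.mul_zero]
  have hP1 : 1 ≤ d (emb hk t) → (k-2-(t:ℕ)) ≤ (k-2-(t:ℕ)) * d (emb hk t) :=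
    fun h => Nat.le_mul_of_pos_right _ h
  simp only [hle, hsum_s_d, hsum_s_de, hdeκ, hdeκ', hforall, hQ']
  by_cases hQ : ∀ u ∉ s, d (emb hk u) = 0
  · simp only [hQ, iff_true_intro hQ, and_true, true_and]
    generalize hPP : (k-2-(t:ℕ)) * d (emb hk t) = P at *
    split_ifs <;> first | (exfalso; omega) | norm_num | omega
  · simp [hQ]
end Cmul

section Cprod
variable {k : ℕ}

lemma Cser_prod (hk : 3 ≤ k) (s : Finset (Fin (k-2))) :
    Cser hk s * ∏ t ∈ s,
        (1 - monomial (single (emb hk t) 1 + single (kap hk) (k-2-(t:ℕ))) 1)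
      = Cser hk ∅ := by
  classical
  induction s using Finset.induction_on with
  | empty => rw [Finset.prod_empty, mul_one]
  | @insert a s ha ih =>
    rw [Finset.prod_insert ha, ← mul_assoc,
      Cser_mul hk (insert a s) a (Finset.mem_insert_self a s), Finset.erase_insert ha, ih]

lemma Cser_empty (hk : 3 ≤ k) : Cser hk ∅ = monomial (single (kap hk) (k-2)) 1 := by
  ext d
  rw [coeff_Cser, coeff_monomial]
  refine if_congr ?_ rfl rfl
  simp only [Finset.sum_empty, Nat.add_zero, Finset.notMem_empty, not_false_iff, true_implies]
  constructor
  · rintro ⟨h1, h2, h3⟩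
    ext i
    rcases lt_trichotomy (i : ℕ) (k-2) with h | h | h
    · have hie : i = emb hk ⟨(i : ℕ), h⟩ := Fin.ext rfl
      rw [hie, h3 ⟨(i : ℕ), h⟩, Finsupp.single_apply,
        if_neg (fun hh => emb_ne_kap hk ⟨(i : ℕ), h⟩ hh.symm)]
    · have hie : i = kap' hk := Fin.ext (by simpa [kap'] using h)
      rw [hie, h2, Finsupp.single_apply, if_neg (fun hh => kap_ne_kap' hk hh)]
    · have hie : i = kap hk := by
        have hlt := i.isLt
        exact Fin.ext (by simp only [kap, Fin.val_mk]; omega)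
      rw [hie, h1, Finsupp.single_eq_same]
  · rintro rfl
    refine ⟨Finsupp.single_eq_same, ?_, fun u => ?_⟩
    · rw [Finsupp.single_apply, if_neg (fun hh => kap_ne_kap' hk hh)]
    · rw [Finsupp.single_apply, if_neg (fun hh => emb_ne_kap hk u hh.symm)]

end Cprod

section Assemble
variable {k : ℕ}

lemma Bser_eq (hk : 3 ≤ k) :
    Bser hk = monomial (single (kap hk) (k-2)) 1
      * (1 - monomial (single (kap hk) 1) 1)⁻¹
      * (1 - monomial (single (kap' hk) 1) 1)⁻¹
      * ∏ t : Fin (k-2),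
          (1 - monomial (single (emb hk t) 1 + single (kap hk) (k-2-(t:ℕ))) 1)⁻¹ := by
  classical
  have hne : ∀ t : Fin (k-2),
      (single (emb hk t) 1 + single (kap hk) (k-2-(t:ℕ)) : Fin k →₀ ℕ) ≠ 0 := by
    intro t h
    have h1 : (single (emb hk t) 1 + single (kap hk) (k-2-(t:ℕ)) : Fin k →₀ ℕ) (emb hk t)
        = 1 := by
      rw [Finsupp.add_apply, Finsupp.single_eq_same, Finsupp.single_apply,
        if_neg (fun hh => emb_ne_kap hk t hh.symm)]
      omega
    rw [h] at h1
    simp at h1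
  have hκ0 : (single (kap hk) 1 : Fin k →₀ ℕ) ≠ 0 :=
    fun h => one_ne_zero (Finsupp.single_eq_zero.mp h)
  have hκ'0 : (single (kap' hk) 1 : Fin k →₀ ℕ) ≠ 0 :=
    fun h => one_ne_zero (Finsupp.single_eq_zero.mp h)
  have key : Bser hk * ((1 - monomial (single (kap hk) 1) 1) *
      ((1 - monomial (single (kap' hk) 1) 1) *
        ∏ t : Fin (k-2),
          (1 - monomial (single (emb hk t) 1 + single (kap hk) (k-2-(t:ℕ))) 1)))
      = monomial (single (kap hk) (k-2)) 1 := by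
    rw [← mul_assoc, Bser_mul hk, ← mul_assoc, B1ser_mul hk, Cser_prod hk Finset.univ,
      Cser_empty hk]
  have c1 : (1 - monomial (single (kap hk) 1) (1:ℚ))
      * (1 - monomial (single (kap hk) 1) 1)⁻¹ = 1 :=
    MvPowerSeries.mul_inv_cancel _ (constCoeff_one_sub_monomial hκ0)
  have c2 : (1 - monomial (single (kap' hk) 1) (1:ℚ))
      * (1 - monomial (single (kap' hk) 1) 1)⁻¹ = 1 :=
    MvPowerSeries.mul_inv_cancel _ (constCoeff_one_sub_monomial hκ'0)
  have c3 : (∏ t : Fin (k-2),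
        (1 - monomial (single (emb hk t) 1 + single (kap hk) (k-2-(t:ℕ))) (1:ℚ)))
      * (∏ t : Fin (k-2),
        (1 - monomial (single (emb hk t) 1 + single (kap hk) (k-2-(t:ℕ))) 1)⁻¹) = 1 :=
    prod_mul_prod_inv Finset.univ _ (fun t _ => constCoeff_one_sub_monomial (hne t))
  rw [← key]
  symm
  calc Bser hk * ((1 - monomial (single (kap hk) 1) 1) *
      ((1 - monomial (single (kap' hk) 1) 1) *
        ∏ t : Fin (k-2),
          (1 - monomial (single (emb hk t) 1 + single (kap hk) (k-2-(t:ℕ))) 1)))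
      * (1 - monomial (single (kap hk) 1) 1)⁻¹
      * (1 - monomial (single (kap' hk) 1) 1)⁻¹
      * ∏ t : Fin (k-2),
          (1 - monomial (single (emb hk t) 1 + single (kap hk) (k-2-(t:ℕ))) 1)⁻¹
      = Bser hk * (((1 - monomial (single (kap hk) 1) 1)
            * (1 - monomial (single (kap hk) 1) 1)⁻¹)
          * (((1 - monomial (single (kap' hk) 1) 1)
            * (1 - monomial (single (kap' hk) 1) 1)⁻¹)
          * ((∏ t : Fin (k-2),
              (1 - monomial (single (emb hk t) 1 + single (kap hk) (k-2-(t:ℕ))) 1))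
            * (∏ t : Fin (k-2),
              (1 - monomial (single (emb hk t) 1
                + single (kap hk) (k-2-(t:ℕ))) 1)⁻¹)))) := by ring
    _ = Bser hk := by rw [c1, c2, c3]; ring

end Assemble


/-- Generating function of `k`-gon partitions (after the change of variables
`bᵢ = aᵢ - aᵢ₋₁`): if `S ∈ ℚ[[x₁,…,x_k]]` has coefficient `1` on `x₁^{b₁} ⋯ x_k^{b_k}`
exactly when `(k-3) + ∑_{i=1}^{k-2} (k-1-i) bᵢ ≥ b_k`, then
`S = ∏ᵢ (1-xᵢ)⁻¹ - x_k^{k-2} (1-x_k)⁻¹ (1-x_{k-1})⁻¹ ∏_{i=1}^{k-2} (1-xᵢ x_k^{k-1-i})⁻¹`.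
(Variables are 0-indexed: `xᵢ = X ⟨i-1⟩`.) -/
theorem kgon_partition_generating_function {k : ℕ} (hk : 3 ≤ k)
    (S : MvPowerSeries (Fin k) ℚ)
    (hS : ∀ d : Fin k →₀ ℕ,
      MvPowerSeries.coeff d S =
        if d ⟨k - 1, by omega⟩ ≤
            (k - 3) + ∑ t : Fin (k - 2), (k - 2 - (t : ℕ)) * d (Fin.castLE (by omega) t)
          then 1 else 0) :
    S = (∏ i : Fin k, (1 - X i)⁻¹) -
        (X ⟨k - 1, by omega⟩ : MvPowerSeries (Fin k) ℚ) ^ (k - 2) *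
          (1 - X ⟨k - 1, by omega⟩)⁻¹ * (1 - X ⟨k - 2, by omega⟩)⁻¹ *
          ∏ t : Fin (k - 2),
            (1 - X (Fin.castLE (by omega) t) *
              (X ⟨k - 1, by omega⟩ : MvPowerSeries (Fin k) ℚ) ^ (k - 2 - (t : ℕ)))⁻¹ := by
  classical
  have hSform : S = Aser Finset.univ - Bser hk := by
    ext d
    rw [hS d, map_sub, coeff_Aser, coeff_Bser, if_pos (Finset.subset_univ _)]
    have e1 : d (⟨k - 1, by omega⟩ : Fin k) = d (kap hk) := rfl
    have e2 : ∑ t : Fin (k - 2), (k - 2 - (t : ℕ)) * d (Fin.castLE (by omega) t)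
        = ∑ t : Fin (k - 2), (k - 2 - (t : ℕ)) * d (emb hk t) := rfl
    simp only [e1, e2]
    split_ifs <;> first | (exfalso; omega) | norm_num
  rw [hSform, ← prod_inv_A Finset.univ, Bser_eq hk]
  congr 1
  simp only [X_pow_eq]
  simp only [X_def]
  simp only [monomial_mul_monomial, one_mul]
  rfl
end

section
/- Let $k \geq 1$ be an integer. In the ring of formal power series $\mathbb{Q}[[x_1,\dots,x_k]]$, let $S$ be the series whose coefficient of $x_1^{a_1} \cdots x_k^{a_k}$ is $1$ if the tuple $(a_1,\dots,a_k) \in \mathbb{N}^k$ satisfies $a_1 + \cdots + a_k \geq 2 a_i$ for every $i$, and $0$ otherwise. Then $$S = \prod_{j=1}^{k} (1 - x_j)^{-1} \; - \; \sum_{i=1}^{k} x_i\,(1 - x_i)^{-1} \prod_{j \neq i} (1 - x_j x_i)^{-1},$$ where each inverted factor is a unit of the power series ring (its constant term is $1$). -/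
open MvPowerSeries Finset

namespace KgonAux

variable {k : ℕ}

open scoped Classical in
noncomputable def geom (m : Fin k →₀ ℕ) : MvPowerSeries (Fin k) ℚ :=
  fun d => if ∃ n : ℕ, d = n • m then 1 else 0

open scoped Classical in
lemma coeff_geom (m d : Fin k →₀ ℕ) :
    MvPowerSeries.coeff d (geom m) = if ∃ n : ℕ, d = n • m then 1 else 0 := rfl

lemma geom_mul (m : Fin k →₀ ℕ) (hm : m ≠ 0) :
    geom m * (1 - MvPowerSeries.monomial m 1) = 1 := by
  classical
  ext d
  rw [mul_sub, mul_one, map_sub, coeff_mul_monomial, coeff_geom, coeff_one]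
  by_cases hd : d = 0
  · subst hd
    rw [if_pos ⟨0, by simp⟩, if_pos rfl, if_neg]
    · norm_num
    · intro h
      exact hm (le_antisymm (by simpa using h) (zero_le (a := m)))
  · rw [if_neg hd]
    by_cases h1 : ∃ n : ℕ, d = n • m
    · obtain ⟨n, rfl⟩ := h1
      match n with
      | 0 => simp at hd
      | (n + 1) =>
        rw [if_pos ⟨n + 1, rfl⟩, succ_nsmul, if_pos le_add_self, add_tsub_cancel_right,
          coeff_geom, if_pos ⟨n, rfl⟩]
        ring
    · rw [if_neg h1, zero_sub, neg_eq_zero]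
      split_ifs with h2
      · rw [coeff_geom, if_neg, zero_mul]
        rintro ⟨n, hn⟩
        exact h1 ⟨n + 1, by rw [succ_nsmul, ← hn, tsub_add_cancel_of_le h2]⟩
      · rfl

lemma inv_eq_geom (m : Fin k →₀ ℕ) (hm : m ≠ 0) :
    (1 - MvPowerSeries.monomial m 1)⁻¹ = geom m := by
  rw [MvPowerSeries.inv_eq_iff_mul_eq_one]
  · exact geom_mul m hm
  · rw [map_sub, constantCoeff_one, ← coeff_zero_eq_constantCoeff_apply, coeff_monomial,
      if_neg (Ne.symm hm)]
    norm_num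

lemma sum_single_eq (d : Fin k →₀ ℕ) : ∑ j : Fin k, Finsupp.single j (d j) = d := by
  ext a
  rw [Finsupp.finset_sum_apply]
  simp only [Finsupp.single_apply]
  simp [Finset.sum_ite_eq' univ a (fun j => d j)]

lemma coeff_prod_geom_single (d : Fin k →₀ ℕ) :
    MvPowerSeries.coeff d (∏ j : Fin k, geom (Finsupp.single j 1)) = 1 := by
  classical
  rw [MvPowerSeries.coeff_prod]
  set l₀ : Fin k →₀ (Fin k →₀ ℕ) :=
    Finsupp.equivFunOnFinite.symm (fun j => Finsupp.single j (d j)) with hl₀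
  have hl₀app : ∀ j, l₀ j = Finsupp.single j (d j) := fun j => rfl
  have hmem : l₀ ∈ finsuppAntidiag univ d := by
    rw [mem_finsuppAntidiag]
    refine ⟨?_, subset_univ _⟩
    rw [show univ.sum ⇑l₀ = ∑ j : Fin k, Finsupp.single j (d j) from
      Finset.sum_congr rfl fun j _ => hl₀app j]
    exact sum_single_eq d
  rw [Finset.sum_congr rfl (fun l hl => ?_), Finset.sum_ite_eq' (finsuppAntidiag univ d) l₀
    (fun _ => (1 : ℚ)), if_pos hmem]
  · rw [mem_finsuppAntidiag] at hl
    split_ifs with h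
    · subst h
      apply Finset.prod_eq_one
      intro j _
      rw [hl₀app j, coeff_geom, if_pos ⟨d j, by simp [Finsupp.smul_single]⟩]
    · by_contra hprod
      apply h
      have hne : ∀ j, MvPowerSeries.coeff (l j) (geom (Finsupp.single j 1)) ≠ 0 :=
        fun j h0 => hprod (Finset.prod_eq_zero (mem_univ j) h0)
      have hex : ∀ j, ∃ n : ℕ, l j = Finsupp.single j n := by
        intro j
        have hcond : ∃ n : ℕ, l j = n • Finsupp.single j 1 := by
          by_contra hno
          exact hne j (by rw [coeff_geom, if_neg hno])
        obtain ⟨n, hn⟩ := hcond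
        exact ⟨n, by simpa [Finsupp.smul_single] using hn⟩
      choose n hn using hex
      have hda : ∀ a, d a = n a := by
        intro a
        conv_lhs => rw [← hl.1]
        rw [show univ.sum ⇑l = ∑ j : Fin k, Finsupp.single j (n j) from
          Finset.sum_congr rfl fun j _ => hn j]
        rw [Finsupp.finset_sum_apply]
        simp only [Finsupp.single_apply]
        simp [Finset.sum_ite_eq' univ a (fun j => n j)]
      ext j
      rw [hl₀app j, hn j, hda j]
lemma smul_single_one (a : Fin k) (n : ℕ) :
    n • Finsupp.single a (1 : ℕ) = Finsupp.single a n := by simp [Finsupp.smul_single]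

lemma smul_pair (j i : Fin k) (n : ℕ) :
    n • (Finsupp.single j (1 : ℕ) + Finsupp.single i 1) =
      Finsupp.single j n + Finsupp.single i n := by
  rw [smul_add, smul_single_one, smul_single_one]

open scoped Classical in
lemma coeff_X_mul_geom (i : Fin k) (e : Fin k →₀ ℕ) :
    MvPowerSeries.coeff e ((X i : MvPowerSeries (Fin k) ℚ) * geom (Finsupp.single i 1)) =
      if ∃ n : ℕ, e = Finsupp.single i (n + 1) then 1 else 0 := by
  rw [X_def, coeff_monomial_mul]
  by_cases h : ∃ n : ℕ, e = Finsupp.single i (n + 1)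
  · obtain ⟨n, rfl⟩ := h
    have hle : Finsupp.single i (1 : ℕ) ≤ Finsupp.single i (n + 1) := by
      rw [Finsupp.le_def]
      intro a
      simp only [Finsupp.single_apply]
      split <;> omega
    have hsub : Finsupp.single i (n + 1) - Finsupp.single i (1 : ℕ) = Finsupp.single i n := by
      ext a
      simp only [Finsupp.tsub_apply, Finsupp.single_apply]
      split <;> omega
    rw [if_pos hle, one_mul, hsub, coeff_geom, if_pos ⟨n, (smul_single_one i n).symm⟩,
      if_pos ⟨n, rfl⟩]
  · rw [if_neg h]
    split_ifs with h2
    · rw [one_mul, coeff_geom, if_neg]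
      rintro ⟨n, hn⟩
      rw [smul_single_one] at hn
      refine h ⟨n, ?_⟩
      have := tsub_add_cancel_of_le h2
      rw [← this, hn, ← Finsupp.single_add]
    · rfl

lemma coeff_term (i : Fin k) (d : Fin k →₀ ℕ) :
    MvPowerSeries.coeff d ((X i : MvPowerSeries (Fin k) ℚ) * geom (Finsupp.single i 1) *
      ∏ j ∈ univ.erase i, geom (Finsupp.single j 1 + Finsupp.single i 1)) =
    if ∑ j ∈ univ.erase i, d j + 1 ≤ d i then 1 else 0 := by
  classical
  set s := ∑ j ∈ univ.erase i, d j with hs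
  set f : Fin k → MvPowerSeries (Fin k) ℚ :=
    fun j => if j = i then (X i : MvPowerSeries (Fin k) ℚ) * geom (Finsupp.single i 1)
      else geom (Finsupp.single j 1 + Finsupp.single i 1) with hf
  have hprod : (X i : MvPowerSeries (Fin k) ℚ) * geom (Finsupp.single i 1) *
      ∏ j ∈ univ.erase i, geom (Finsupp.single j 1 + Finsupp.single i 1) = ∏ j : Fin k, f j := by
    rw [← Finset.mul_prod_erase univ f (mem_univ i)]
    congr 1
    · simp [hf]
    · exact Finset.prod_congr rfl fun j hj => by simp [hf, (Finset.mem_erase.1 hj).1]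
  rw [hprod, MvPowerSeries.coeff_prod]
  set L : Fin k →₀ (Fin k →₀ ℕ) := Finsupp.equivFunOnFinite.symm
    (fun j => if j = i then Finsupp.single i (d i - s)
      else (d j) • (Finsupp.single j 1 + Finsupp.single i 1)) with hL
  have hLapp : ∀ j, L j = if j = i then Finsupp.single i (d i - s)
      else (d j) • (Finsupp.single j 1 + Finsupp.single i 1) := fun j => rfl
  have eval_sum : ∀ (n : Fin k → ℕ) (l : Fin k →₀ (Fin k →₀ ℕ)),
      (∀ j, l j = if j = i then Finsupp.single i (n j)
        else Finsupp.single j (n j) + Finsupp.single i (n j)) →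
      ∀ a, (univ.sum ⇑l) a = if a = i then n i + ∑ j ∈ univ.erase i, n j else n a := by
    intro n l h a
    rw [Finsupp.finset_sum_apply, ← Finset.add_sum_erase univ _ (mem_univ i), h i, if_pos rfl]
    have hterm : ∀ j ∈ univ.erase i, (l j) a =
        (if j = a then n j else 0) + (if i = a then n j else 0) := by
      intro j hj
      rw [h j, if_neg (Finset.mem_erase.1 hj).1]
      simp [Finsupp.single_apply]
    rw [Finset.sum_congr rfl hterm, Finset.sum_add_distrib, Finsupp.single_apply]
    by_cases ha : i = a
    · subst ha
      rw [if_pos rfl, if_pos rfl]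
      rw [Finset.sum_eq_zero (fun j hj => if_neg (Finset.mem_erase.1 hj).1), zero_add]
      simp
    · rw [if_neg (show ¬ a = i from fun hai => ha hai.symm)]
      simp only [ha, if_false, Finset.sum_const_zero, add_zero, zero_add]
      rw [Finset.sum_ite_eq' (univ.erase i) a,
        if_pos (Finset.mem_erase.2 ⟨fun hai => ha hai.symm, mem_univ a⟩)]
  have key : ∀ l ∈ finsuppAntidiag univ d,
      (∏ j : Fin k, MvPowerSeries.coeff (l j) (f j)) =
        if l = L ∧ s + 1 ≤ d i then 1 else 0 := by
    intro l hl
    rw [mem_finsuppAntidiag] at hl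
    by_cases hcase : l = L ∧ s + 1 ≤ d i
    · obtain ⟨rfl, hc⟩ := hcase
      rw [if_pos ⟨rfl, hc⟩]
      apply Finset.prod_eq_one
      intro j _
      by_cases hj : j = i
      · subst hj
        rw [hLapp j, if_pos rfl, hf]
        simp only [eq_self_iff_true, if_true]
        rw [coeff_X_mul_geom, if_pos ⟨d j - s - 1, by congr 1; omega⟩]
      · rw [hLapp j, if_neg hj, hf]
        simp only [if_neg hj]
        rw [coeff_geom, if_pos ⟨d j, rfl⟩]
    · rw [if_neg hcase]
      by_contra hprod
      apply hcase
      have hne : ∀ j, MvPowerSeries.coeff (l j) (f j) ≠ 0 :=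
        fun j h0 => hprod (Finset.prod_eq_zero (mem_univ j) h0)
      have hstr : ∀ j, ∃ n : ℕ, (j = i → 1 ≤ n) ∧
          l j = (if j = i then Finsupp.single i n
            else Finsupp.single j n + Finsupp.single i n) := by
        intro j
        by_cases hj : j = i
        · subst hj
          have hj2 := hne j
          rw [hf] at hj2
          simp only [eq_self_iff_true, if_true] at hj2
          rw [coeff_X_mul_geom] at hj2
          have hex : ∃ n, l j = Finsupp.single j (n + 1) := by
            by_contra hno; exact hj2 (if_neg hno)
          obtain ⟨n, hn⟩ := hex
          exact ⟨n + 1, fun _ => by omega, by rw [if_pos rfl, hn]⟩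
        · have hj2 := hne j
          rw [hf] at hj2
          simp only [if_neg hj] at hj2
          have hex : ∃ n : ℕ, l j = n • (Finsupp.single j 1 + Finsupp.single i 1) := by
            by_contra hno; exact hj2 (by rw [coeff_geom, if_neg hno])
          obtain ⟨n, hn⟩ := hex
          exact ⟨n, fun h => absurd h hj, by rw [if_neg hj, ← smul_pair, hn]⟩
      choose n hn1 hn2 using hstr
      have hd : ∀ a, d a = if a = i then n i + ∑ j ∈ univ.erase i, n j else n a := by
        intro a; rw [← hl.1]; exact eval_sum n l hn2 a
      have hdj : ∀ j ∈ univ.erase i, d j = n j := by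
        intro j hj; rw [hd j, if_neg (Finset.mem_erase.1 hj).1]
      have hsum_eq : s = ∑ j ∈ univ.erase i, n j := Finset.sum_congr rfl hdj
      have hdi : d i = n i + s := by rw [hd i, if_pos rfl, hsum_eq]
      have hni : 1 ≤ n i := hn1 i rfl
      constructor
      · refine Finsupp.ext fun j => ?_
        rw [hLapp j, hn2 j]
        by_cases hj : j = i
        · subst hj
          rw [if_pos rfl, if_pos rfl]
          congr 1
          omega
        · rw [if_neg hj, if_neg hj, smul_pair, hd j, if_neg hj]
      · omega
  rw [Finset.sum_congr rfl key]
  by_cases hc : s + 1 ≤ d i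
  · simp only [hc, and_true]
    have hmem : L ∈ finsuppAntidiag univ d := by
      rw [mem_finsuppAntidiag]
      refine ⟨?_, subset_univ _⟩
      have hstrL : ∀ j, L j = if j = i
          then Finsupp.single i ((fun j' => if j' = i then d i - s else d j') j)
          else Finsupp.single j ((fun j' => if j' = i then d i - s else d j') j)
            + Finsupp.single i ((fun j' => if j' = i then d i - s else d j') j) := by
        intro j
        rw [hLapp j]
        by_cases hj : j = i
        · subst hj; simp only [eq_self_iff_true, if_true]
        · simp only [if_neg hj, smul_pair]
      refine Finsupp.ext fun a => ?_
      rw [eval_sum _ L hstrL a]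
      have hsums : ∑ j ∈ univ.erase i, (if j = i then d i - s else d j) = s :=
        Finset.sum_congr rfl fun j hj => if_neg (Finset.mem_erase.1 hj).1
      by_cases ha : a = i
      · subst ha
        rw [if_pos rfl, if_pos rfl, hsums]
        omega
      · rw [if_neg ha, if_neg ha]
    rw [Finset.sum_ite_eq' (finsuppAntidiag univ d) L (fun _ => (1 : ℚ)), if_pos hmem, if_true]
  · rw [if_neg hc, Finset.sum_eq_zero]
    intro l _
    exact if_neg fun h => hc h.2
end KgonAux

/-- Generating function of (possibly degenerate) `k`-gons with nonnegative integer sides: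
if `S ∈ ℚ[[x₁,…,x_k]]` has coefficient `1` on `x₁^{a₁} ⋯ x_k^{a_k}` exactly when
`a₁ + ⋯ + a_k ≥ 2aᵢ` for every `i`, then
`S = ∏ⱼ (1-xⱼ)⁻¹ - ∑ᵢ xᵢ (1-xᵢ)⁻¹ ∏_{j≠i} (1-xⱼxᵢ)⁻¹`. -/
theorem kgon_generating_function {k : ℕ} (hk : 1 ≤ k)
    (S : MvPowerSeries (Fin k) ℚ)
    (hS : ∀ d : Fin k →₀ ℕ,
      MvPowerSeries.coeff d S = if ∀ i, 2 * d i ≤ ∑ j, d j then 1 else 0) :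
    S = (∏ j : Fin k, (1 - X j)⁻¹) -
        ∑ i : Fin k, (X i : MvPowerSeries (Fin k) ℚ) * (1 - X i)⁻¹ *
          ∏ j ∈ univ.erase i, (1 - X j * X i)⁻¹ := by
  classical
  have h1 : ∀ j : Fin k, ((1 : MvPowerSeries (Fin k) ℚ) - X j)⁻¹ =
      KgonAux.geom (Finsupp.single j 1) := by
    intro j
    rw [X_def]
    exact KgonAux.inv_eq_geom _ (fun h => one_ne_zero (Finsupp.single_eq_zero.1 h))
  have h2 : ∀ i j : Fin k, j ≠ i → ((1 : MvPowerSeries (Fin k) ℚ) - X j * X i)⁻¹ =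
      KgonAux.geom (Finsupp.single j 1 + Finsupp.single i 1) := by
    intro i j hji
    have hX : (X j : MvPowerSeries (Fin k) ℚ) * X i =
        MvPowerSeries.monomial (Finsupp.single j 1 + Finsupp.single i 1) 1 := by
      rw [X_def, X_def, monomial_mul_monomial, one_mul]
    rw [hX]
    apply KgonAux.inv_eq_geom
    intro h
    have := DFunLike.congr_fun h i
    simp [Finsupp.single_apply, hji] at this
  ext d
  rw [hS d, map_sub, map_sum]
  rw [show (∏ j : Fin k, ((1 : MvPowerSeries (Fin k) ℚ) - X j)⁻¹) =
      ∏ j : Fin k, KgonAux.geom (Finsupp.single j 1) from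
    Finset.prod_congr rfl fun j _ => h1 j]
  rw [KgonAux.coeff_prod_geom_single]
  have hterm : ∀ i : Fin k,
      MvPowerSeries.coeff d ((X i : MvPowerSeries (Fin k) ℚ) * (1 - X i)⁻¹ *
        ∏ j ∈ univ.erase i, (1 - X j * X i)⁻¹) =
      if ∑ j ∈ univ.erase i, d j + 1 ≤ d i then 1 else 0 := by
    intro i
    rw [h1 i, Finset.prod_congr rfl (fun j hj => h2 i j (Finset.mem_erase.1 hj).1)]
    exact KgonAux.coeff_term i d
  rw [Finset.sum_congr rfl fun i _ => hterm i]
  have hQ : ∀ i : Fin k, (∑ j ∈ univ.erase i, d j + 1 ≤ d i) ↔ ¬(2 * d i ≤ ∑ j, d j) := by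
    intro i
    have := Finset.add_sum_erase univ (⇑d) (mem_univ i)
    omega
  by_cases hall : ∀ i, 2 * d i ≤ ∑ j, d j
  · rw [if_pos hall, Finset.sum_eq_zero (fun i _ =>
      if_neg (fun h => (hQ i).1 h (hall i))), sub_zero]
  · rw [if_neg hall]
    push_neg at hall
    obtain ⟨i₀, hi₀⟩ := hall
    have hQi₀ : ∑ j ∈ univ.erase i₀, d j + 1 ≤ d i₀ := (hQ i₀).2 (by omega)
    have hzero : ∀ b ∈ univ, b ≠ i₀ →
        (if ∑ j ∈ univ.erase b, d j + 1 ≤ d b then (1 : ℚ) else 0) = 0 := by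
      intro b _ hb
      refine if_neg fun hQb => ?_
      have ha1 : d i₀ ≤ ∑ j ∈ univ.erase b, d j :=
        Finset.single_le_sum (f := fun j => d j) (fun j _ => Nat.zero_le _)
          (Finset.mem_erase.2 ⟨Ne.symm hb, mem_univ i₀⟩)
      have ha2 : d b ≤ ∑ j ∈ univ.erase i₀, d j :=
        Finset.single_le_sum (f := fun j => d j) (fun j _ => Nat.zero_le _)
          (Finset.mem_erase.2 ⟨hb, mem_univ b⟩)
      omega
    rw [Finset.sum_eq_single i₀ hzero (fun h => absurd (mem_univ i₀) h), if_pos hQi₀]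
    norm_num
end

section
/- In the ring of formal power series $\mathbb{Z}[[q]]$ in one variable, let $S$ be the series whose coefficient of $q^n$ is the number of triples $(a_1, a_2, a_3)$ of integers with $1 \leq a_1 \leq a_2 \leq a_3$, $a_1 + a_2 > a_3$, and $a_1 + a_2 + a_3 = n$. Then $$S \cdot (1 - q^2)(1 - q^3)(1 - q^4) = q^3,$$ i.e., the generating function of triangle (3-gon) partitions by perimeter is $\dfrac{q^3}{(1-q^2)(1-q^3)(1-q^4)}$. -/
open PowerSeries Finset

private noncomputable def ind (k : ℕ) : PowerSeries ℤ :=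
  PowerSeries.mk fun n => if k ∣ n then 1 else 0

private lemma geom (k : ℕ) (hk : 0 < k) : (1 - (X : PowerSeries ℤ) ^ k) * ind k = 1 := by
  ext n
  rw [sub_mul, one_mul, map_sub, coeff_X_pow_mul']
  simp only [ind, coeff_mk, coeff_one]
  by_cases h : k ≤ n
  · have hn : ¬ (n = 0) := by omega
    have hiff : k ∣ n ↔ k ∣ n - k := by
      constructor
      · intro hd; exact Nat.dvd_sub hd dvd_rfl
      · intro hd
        have hns : n = (n - k) + k := by omega
        rw [hns]; exact Nat.dvd_add hd dvd_rfl
    rw [if_pos h, if_neg hn]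
    by_cases hd : k ∣ n
    · rw [if_pos hd, if_pos (hiff.mp hd)]; ring
    · rw [if_neg hd, if_neg (fun h' => hd (hiff.mpr h'))]; ring
  · rw [if_neg h]
    by_cases hn : n = 0
    · subst hn
      have : k ∣ 0 := dvd_zero k
      simp [this]
    · have hd : ¬ k ∣ n := fun h' => h (Nat.le_of_dvd (by omega) h')
      simp [hd, hn]

private lemma coeff_prod_inds (m : ℕ) :
    PowerSeries.coeff m (ind 2 * (ind 3 * ind 4)) =
      (Nat.card {w : ℕ × ℕ × ℕ // 2 * w.1 + 3 * w.2.1 + 4 * w.2.2 = m} : ℤ) := by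
  classical
  simp only [coeff_mul, ind, coeff_mk, Finset.mul_sum]
  have step1 : ∀ p ∈ Finset.HasAntidiagonal.antidiagonal m,
      (∑ q ∈ Finset.HasAntidiagonal.antidiagonal p.2,
        (if 2 ∣ p.1 then (1:ℤ) else 0) * ((if 3 ∣ q.1 then (1:ℤ) else 0) * (if 4 ∣ q.2 then (1:ℤ) else 0)))
      = ∑ q ∈ Finset.range (m+1) ×ˢ Finset.range (m+1),
          (if q.1 + q.2 = p.2 ∧ 2 ∣ p.1 ∧ 3 ∣ q.1 ∧ 4 ∣ q.2 then (1:ℤ) else 0) := by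
    intro p hp
    rw [Finset.HasAntidiagonal.mem_antidiagonal] at hp
    calc (∑ q ∈ Finset.HasAntidiagonal.antidiagonal p.2,
          (if 2 ∣ p.1 then (1:ℤ) else 0) * ((if 3 ∣ q.1 then (1:ℤ) else 0) * (if 4 ∣ q.2 then (1:ℤ) else 0)))
        = ∑ q ∈ Finset.HasAntidiagonal.antidiagonal p.2,
            (if q.1 + q.2 = p.2 ∧ 2 ∣ p.1 ∧ 3 ∣ q.1 ∧ 4 ∣ q.2 then (1:ℤ) else 0) := by
          apply Finset.sum_congr rfl
          intro q hq
          rw [Finset.HasAntidiagonal.mem_antidiagonal] at hq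
          by_cases h2 : 2 ∣ p.1 <;> by_cases h3 : 3 ∣ q.1 <;> by_cases h4 : 4 ∣ q.2 <;>
            simp [h2, h3, h4, hq]
      _ = ∑ q ∈ Finset.range (m+1) ×ˢ Finset.range (m+1),
            (if q.1 + q.2 = p.2 ∧ 2 ∣ p.1 ∧ 3 ∣ q.1 ∧ 4 ∣ q.2 then (1:ℤ) else 0) := by
          apply Finset.sum_subset
          · intro q hq
            rw [Finset.HasAntidiagonal.mem_antidiagonal] at hq
            simp only [Finset.mem_product, Finset.mem_range]
            omega
          · intro q _ hq2
            rw [Finset.HasAntidiagonal.mem_antidiagonal] at hq2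
            simp [hq2]
  rw [Finset.sum_congr rfl step1, ← Finset.sum_product', Finset.sum_boole]
  norm_cast
  set Fs : Finset ((ℕ × ℕ) × ℕ × ℕ) :=
    Finset.filter (fun x => x.2.1 + x.2.2 = x.1.2 ∧ 2 ∣ x.1.1 ∧ 3 ∣ x.2.1 ∧ 4 ∣ x.2.2)
      (Finset.HasAntidiagonal.antidiagonal m ×ˢ (Finset.range (m+1) ×ˢ Finset.range (m+1))) with hFs
  have hmem : ∀ x : (ℕ × ℕ) × ℕ × ℕ, x ∈ Fs ↔
      (x.1.1 + x.1.2 = m ∧ x.2.1 + x.2.2 = x.1.2 ∧ 2 ∣ x.1.1 ∧ 3 ∣ x.2.1 ∧ 4 ∣ x.2.2) := by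
    intro x
    simp only [hFs, Finset.mem_filter, Finset.mem_product, Finset.HasAntidiagonal.mem_antidiagonal,
      Finset.mem_range]
    omega
  have e : {x : (ℕ × ℕ) × ℕ × ℕ // x ∈ Fs} ≃
      {w : ℕ × ℕ × ℕ // 2 * w.1 + 3 * w.2.1 + 4 * w.2.2 = m} :=
    { toFun := fun x => ⟨(x.1.1.1 / 2, x.1.2.1 / 3, x.1.2.2 / 4), by
        have h := (hmem x.1).mp x.2; dsimp only; omega⟩
      invFun := fun w => ⟨((2 * w.1.1, 3 * w.1.2.1 + 4 * w.1.2.2), (3 * w.1.2.1, 4 * w.1.2.2)),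
        (hmem _).mpr (by have h := w.2; dsimp only; omega)⟩
      left_inv := by
        rintro ⟨⟨⟨a, b⟩, c, d⟩, hx⟩
        have h := (hmem _).mp hx
        apply Subtype.ext
        simp only [Prod.mk.injEq]
        simp only at h
        omega
      right_inv := by
        rintro ⟨⟨x, y, z⟩, hw⟩
        apply Subtype.ext
        simp only [Prod.mk.injEq]
        omega }
  rw [← Nat.card_eq_finsetCard, Nat.card_congr e]

/-- The generating function of triangle (3-gon) partitions by perimeter is
`q³/((1-q²)(1-q³)(1-q⁴))`: if the coefficient of `qⁿ` in `S ∈ ℤ[[q]]` is the number of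
triples `1 ≤ a₁ ≤ a₂ ≤ a₃` with `a₁ + a₂ > a₃` and `a₁ + a₂ + a₃ = n`, then
`S·(1-q²)(1-q³)(1-q⁴) = q³`. -/
theorem triangle_partition_generating_function (S : PowerSeries ℤ)
    (hS : ∀ n : ℕ, PowerSeries.coeff n S =
      (Nat.card {t : ℕ × ℕ × ℕ // 1 ≤ t.1 ∧ t.1 ≤ t.2.1 ∧ t.2.1 ≤ t.2.2 ∧
        t.2.2 < t.1 + t.2.1 ∧ t.1 + t.2.1 + t.2.2 = n} : ℤ)) :
    S * ((1 - (X : PowerSeries ℤ) ^ 2) * (1 - X ^ 3) * (1 - X ^ 4)) = X ^ 3 := by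
  have key : S = X ^ 3 * (ind 2 * (ind 3 * ind 4)) := by
    ext n
    rw [hS n, coeff_X_pow_mul']
    by_cases h3 : 3 ≤ n
    · rw [if_pos h3, coeff_prod_inds]
      congr 1
      apply Nat.card_congr
      exact
        { toFun := fun t => ⟨(t.1.2.1 - t.1.1, (t.1.1 - 1) - (t.1.2.2 - t.1.2.1), t.1.2.2 - t.1.2.1),
            by have h := t.2; dsimp only; omega⟩
          invFun := fun w => ⟨(1 + w.1.2.1 + w.1.2.2, 1 + w.1.1 + w.1.2.1 + w.1.2.2,
              1 + w.1.1 + w.1.2.1 + 2 * w.1.2.2),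
            by have h := w.2; dsimp only; omega⟩
          left_inv := by
            rintro ⟨⟨a, b, c⟩, ht⟩
            apply Subtype.ext
            simp only [Prod.mk.injEq]
            simp only at ht
            omega
          right_inv := by
            rintro ⟨⟨x, y, z⟩, hw⟩
            apply Subtype.ext
            simp only [Prod.mk.injEq]
            simp only at hw
            omega }
    · rw [if_neg h3]
      have : IsEmpty {t : ℕ × ℕ × ℕ // 1 ≤ t.1 ∧ t.1 ≤ t.2.1 ∧ t.2.1 ≤ t.2.2 ∧
          t.2.2 < t.1 + t.2.1 ∧ t.1 + t.2.1 + t.2.2 = n} := by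
        constructor
        rintro ⟨⟨a, b, c⟩, ht⟩
        simp only at ht
        omega
      rw [Nat.card_of_isEmpty]
      simp
  calc S * ((1 - (X : PowerSeries ℤ) ^ 2) * (1 - X ^ 3) * (1 - X ^ 4))
      = X ^ 3 * (((1 - (X : PowerSeries ℤ) ^ 2) * ind 2) * (((1 - X ^ 3) * ind 3) *
          ((1 - X ^ 4) * ind 4))) := by rw [key]; ring
    _ = X ^ 3 := by rw [geom 2 (by norm_num), geom 3 (by norm_num), geom 4 (by norm_num)]; ring
end
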